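/- arXiv:1709.02224 — 3 statements merged into one kernel-verified Lean document; each statement's English description precedes it below -/
import Mathlib

section
/- Let (σ₁,σ₂) be a local umbilic-free Legendre map in curvature line coordinates on U, and define the middle potential η_u := σ₁ ∧ ∂_uσ₁, η_v := −σ₁ ∧ ∂_vσ₁. Assume the genericity condition that the five vectors σ₁, σ₂, ∂_vσ₁, ∂_uσ₂, ∂_u∂_uσ₂ are linearly independent at every point of U. Suppose there exist smooth maps p₀,…,p_d : U → ℝ^6 with p_d nowhere zero such that for every t ∈ ℝ the polynomial p(t) := Σ_{k=0}^{d} t^k p_k satisfies ∂_u(p(t)) + t η_u(p(t)) = 0 and ∂_v(p(t)) + t η_v(p(t)) = 0 (a polynomial conserved quantity of d + tη). Then ∂_uσ₁ ∈ span{σ₁} at every point of U, i.e., f is a channel surface with circular curvature direction ∂_u. -/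
noncomputable section

/-- `ℝ^{4,2}`: `ℝ^6` with a bilinear form of signature (4,2). -/
abbrev V6 : Type := Fin 6 → ℝ

/-- The symmetric bilinear form of signature (4,2) on `ℝ^6`. -/
def form (x y : V6) : ℝ :=
  x 0 * y 0 + x 1 * y 1 + x 2 * y 2 + x 3 * y 3 - x 4 * y 4 - x 5 * y 5

/-- Partial derivative in the first (`u`) coordinate. -/
def pu (σ : ℝ × ℝ → V6) (p : ℝ × ℝ) : V6 := fderiv ℝ σ p (1, 0)

/-- Partial derivative in the second (`v`) coordinate. -/
def pv (σ : ℝ × ℝ → V6) (p : ℝ × ℝ) : V6 := fderiv ℝ σ p (0, 1)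

/-- The contact plane `f = span{σ₁, σ₂}`. -/
def spanF (σ₁ σ₂ : ℝ × ℝ → V6) (p : ℝ × ℝ) : Submodule ℝ V6 :=
  Submodule.span ℝ {σ₁ p, σ₂ p}

/-- A local umbilic-free Legendre map in curvature line coordinates `(u,v)` on `U`,
given by lifts `σ₁, σ₂` of the two curvature sphere congruences, with curvature
directions `T₁ = ∂_u` (for `s₁ = span{σ₁}`) and `T₂ = ∂_v` (for `s₂ = span{σ₂}`). -/
structure IsLegendre (U : Set (ℝ × ℝ)) (σ₁ σ₂ : ℝ × ℝ → V6) : Prop where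
  open_U : IsOpen U
  smooth₁ : ContDiffOn ℝ (⊤ : ℕ∞) σ₁ U
  smooth₂ : ContDiffOn ℝ (⊤ : ℕ∞) σ₂ U
  indep : ∀ p ∈ U, LinearIndependent ℝ ![σ₁ p, σ₂ p]
  iso₁₁ : ∀ p ∈ U, form (σ₁ p) (σ₁ p) = 0
  iso₁₂ : ∀ p ∈ U, form (σ₁ p) (σ₂ p) = 0
  iso₂₂ : ∀ p ∈ U, form (σ₂ p) (σ₂ p) = 0
  contact_u : ∀ p ∈ U, form (pu σ₁ p) (σ₂ p) = 0
  contact_v : ∀ p ∈ U, form (pv σ₁ p) (σ₂ p) = 0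
  curv₁ : ∀ p ∈ U, pu σ₁ p ∈ spanF σ₁ σ₂ p
  curv₂ : ∀ p ∈ U, pv σ₂ p ∈ spanF σ₁ σ₂ p
  umb₁ : ∀ p ∈ U, pv σ₁ p ∉ spanF σ₁ σ₂ p
  umb₂ : ∀ p ∈ U, pu σ₂ p ∉ spanF σ₁ σ₂ p

/-- The wedge `a∧b`, acting as the skew endomorphism `x ↦ ⟨a,x⟩b − ⟨b,x⟩a`. -/
def wedge (a b x : V6) : V6 := form a x • b - form b x • a

/-! ### Algebraic auxiliary lemmas -/

lemma form_symm (x y : V6) : form x y = form y x := by simp [form]; ring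

/-- linear functional `form a ·` as a linear map -/
def formL (a : V6) : V6 →ₗ[ℝ] ℝ where
  toFun x := form a x
  map_add' y z := by simp [form]; ring
  map_smul' c y := by simp [form, smul_eq_mul]; ring

lemma formL_apply (a x : V6) : formL a x = form a x := rfl

/-- `wedge a b ·` as a linear map -/
def wedgeL (a b : V6) : V6 →ₗ[ℝ] V6 :=
  (formL a).smulRight b - (formL b).smulRight a

lemma wedgeL_apply (a b x : V6) : wedgeL a b x = wedge a b x := rfl

lemma wedge_sum_smul (a b : V6) (s : Finset ℕ) (c : ℕ → ℝ) (x : ℕ → V6) :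
    wedge a b (∑ k ∈ s, c k • x k) = ∑ k ∈ s, c k • wedge a b (x k) := by
  calc wedge a b (∑ k ∈ s, c k • x k) = wedgeL a b (∑ k ∈ s, c k • x k) := rfl
    _ = ∑ k ∈ s, wedgeL a b (c k • x k) := map_sum (wedgeL a b) _ s
    _ = ∑ k ∈ s, c k • wedge a b (x k) := by
        refine Finset.sum_congr rfl fun k _ => ?_
        rw [map_smul, wedgeL_apply]

lemma wedge_zero (a b : V6) : wedge a b 0 = 0 := by simp [wedge, form]

lemma form_wedge_right (x a b z : V6) :
    form x (wedge a b z) = form a z * form x b - form b z * form x a := by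
  simp [wedge, form]; ring

lemma form_neg_right (x y : V6) : form x (-y) = -form x y := by simp [form]; ring

lemma form_add_right (x y z : V6) : form x (y + z) = form x y + form x z := by
  simp [form]; ring

lemma form_smul_right (x : V6) (c : ℝ) (y : V6) : form x (c • y) = c * form x y := by
  simp [form]; ring

lemma form_span_pair_zero {s1 s2 x w : V6} (hx : x ∈ Submodule.span ℝ ({s1, s2} : Set V6))
    (h1 : form s1 w = 0) (h2 : form s2 w = 0) : form x w = 0 := by
  rcases Submodule.mem_span_pair.1 hx with ⟨a, b, rfl⟩
  simp only [form, Pi.add_apply, Pi.smul_apply, smul_eq_mul] at *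
  linear_combination a * h1 + b * h2

/-! ### Polynomial coefficient extraction -/

lemma poly_coeff_zero (n : ℕ) (c : ℕ → ℝ)
    (h : ∀ t : ℝ, ∑ k ∈ Finset.range n, c k * t ^ k = 0) :
    ∀ k < n, c k = 0 := by
  intro k hk
  set q : Polynomial ℝ := ∑ j ∈ Finset.range n, Polynomial.C (c j) * Polynomial.X ^ j with hq
  have hev : ∀ t : ℝ, q.eval t = 0 := by
    intro t; rw [hq, Polynomial.eval_finset_sum]; simpa using h t
  have hq0 : q = 0 := Polynomial.funext (by simp [hev])
  have := congrArg (fun p => Polynomial.coeff p k) hq0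
  simp only [hq, Polynomial.finset_sum_coeff, Polynomial.coeff_C_mul, Polynomial.coeff_X_pow,
    Polynomial.coeff_zero] at this
  rw [Finset.sum_eq_single k (by intro b _ hb; simp [Ne.symm hb])
    (by intro h'; exact absurd (Finset.mem_range.2 hk) h')] at this
  simpa using this

lemma poly_coeff_zero_vec (n : ℕ) (c : ℕ → V6)
    (h : ∀ t : ℝ, ∑ k ∈ Finset.range n, t ^ k • c k = 0) :
    ∀ k < n, c k = 0 := by
  intro k hk
  funext i
  refine poly_coeff_zero n (fun j => c j i) (fun t => ?_) k hk
  have := congrFun (h t) i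
  simpa [Finset.sum_apply, mul_comm] using this

/-- Extraction of the two top coefficients of a polynomial conserved-quantity equation. -/
lemma extract_coeffs (d : ℕ) (D Wg : ℕ → V6)
    (h : ∀ t : ℝ, (∑ k ∈ Finset.range (d + 1), t ^ k • D k)
      + (∑ k ∈ Finset.range (d + 1), t ^ (k + 1) • Wg k) = 0) :
    Wg d = 0 ∧ D d + (if d = 0 then 0 else Wg (d - 1)) = 0 := by
  set c : ℕ → V6 := fun k =>
    (if k < d + 1 then D k else 0) + (if 1 ≤ k ∧ k ≤ d + 1 then Wg (k - 1) else 0) with hc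
  have hpoly : ∀ t : ℝ, ∑ k ∈ Finset.range (d + 2), t ^ k • c k = 0 := by
    intro t
    have e1 : ∑ k ∈ Finset.range (d + 2), t ^ k • (if k < d + 1 then D k else 0)
        = ∑ k ∈ Finset.range (d + 1), t ^ k • D k := by
      rw [Finset.sum_range_succ, if_neg (lt_irrefl (d + 1)), smul_zero, add_zero]
      exact Finset.sum_congr rfl fun k hk => by rw [if_pos (Finset.mem_range.1 hk)]
    have e2 : ∑ k ∈ Finset.range (d + 2), t ^ k • (if 1 ≤ k ∧ k ≤ d + 1 then Wg (k - 1) else 0)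
        = ∑ k ∈ Finset.range (d + 1), t ^ (k + 1) • Wg k := by
      rw [Finset.sum_range_succ' (fun k => t ^ k • (if 1 ≤ k ∧ k ≤ d + 1 then Wg (k - 1) else 0)) (d + 1)]
      rw [if_neg (show ¬(1 ≤ 0 ∧ 0 ≤ d + 1) by omega), smul_zero, add_zero]
      refine Finset.sum_congr rfl fun k hk => ?_
      have hk' := Finset.mem_range.1 hk
      rw [if_pos (show 1 ≤ k + 1 ∧ k + 1 ≤ d + 1 by omega)]
      simp
    calc ∑ k ∈ Finset.range (d + 2), t ^ k • c k
        = ∑ k ∈ Finset.range (d + 2), (t ^ k • (if k < d + 1 then D k else 0)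
            + t ^ k • (if 1 ≤ k ∧ k ≤ d + 1 then Wg (k - 1) else 0)) := by
          refine Finset.sum_congr rfl fun k _ => ?_
          rw [hc, smul_add]
      _ = (∑ k ∈ Finset.range (d + 2), t ^ k • (if k < d + 1 then D k else 0))
          + ∑ k ∈ Finset.range (d + 2), t ^ k • (if 1 ≤ k ∧ k ≤ d + 1 then Wg (k - 1) else 0) :=
          Finset.sum_add_distrib
      _ = 0 := by rw [e1, e2]; exact h t
  have hz := poly_coeff_zero_vec (d + 2) c hpoly
  constructor
  · have h1 := hz (d + 1) (by omega)
    simp only [hc] at h1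
    rw [if_neg (lt_irrefl (d + 1)), if_pos (show 1 ≤ d + 1 ∧ d + 1 ≤ d + 1 by omega)] at h1
    simpa using h1
  · have h2 := hz d (by omega)
    simp only [hc] at h2
    rw [if_pos (show d < d + 1 by omega)] at h2
    by_cases hd : d = 0
    · subst hd
      rw [if_neg (show ¬(1 ≤ 0 ∧ 0 ≤ 0 + 1) by omega)] at h2
      simpa using h2
    · rw [if_pos (show 1 ≤ d ∧ d ≤ d + 1 by omega)] at h2
      rw [if_neg hd]
      exact h2

/-! ### Minors -/

/-- two vectors with all 2×2 minors vanishing: if `y ≠ 0` then `x ∈ span {y}` -/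
lemma mem_span_of_minors {x y : V6} (hy : y ≠ 0)
    (h : ∀ i j : Fin 6, x i * y j - x j * y i = 0) :
    x ∈ Submodule.span ℝ ({y} : Set V6) := by
  have : ∃ i, y i ≠ 0 := by
    by_contra hc
    push_neg at hc
    exact hy (funext fun i => hc i)
  obtain ⟨i0, hi0⟩ := this
  rw [Submodule.mem_span_singleton]
  refine ⟨x i0 / y i0, ?_⟩
  funext j
  simp only [Pi.smul_apply, smul_eq_mul]
  field_simp
  linarith [h j i0]

/-! ### The bilinear form `B6` and orthogonal complements -/

/-- `form` as a bilinear form. -/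
def B6 : LinearMap.BilinForm ℝ V6 :=
  LinearMap.mk₂ ℝ form
    (fun x y z => by simp [form]; ring)
    (fun c x y => by simp [form, smul_eq_mul]; ring)
    (fun x y z => by simp [form]; ring)
    (fun c x y => by simp [form, smul_eq_mul]; ring)

lemma B6_apply (x y : V6) : B6 x y = form x y := rfl

lemma B6_nondegenerate : B6.Nondegenerate := by
  refine (LinearMap.IsRefl.nondegenerate_iff_separatingLeft (B := B6) (fun x y h => by rwa [B6_apply, form_symm] at h)).2 ?_
  intro x hx
  funext i
  fin_cases i
  · simpa [B6_apply, form, Pi.single_apply] using hx (Pi.single 0 1)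
  · simpa [B6_apply, form, Pi.single_apply] using hx (Pi.single 1 1)
  · simpa [B6_apply, form, Pi.single_apply] using hx (Pi.single 2 1)
  · simpa [B6_apply, form, Pi.single_apply] using hx (Pi.single 3 1)
  · have := hx (Pi.single 4 1); simp [B6_apply, form, Pi.single_apply] at this; simpa using this
  · have := hx (Pi.single 5 1); simp [B6_apply, form, Pi.single_apply] at this; simpa using this

lemma B6_refl : B6.IsRefl := by
  intro x y h
  rwa [B6_apply, form_symm] at h

lemma range_pair (s1 s2 : V6) : Set.range ![s1, s2] = {s1, s2} := by
  ext z
  simp [Matrix.range_cons, Matrix.range_empty]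
  tauto

/-- If `x` is form-orthogonal to four linearly independent vectors which are all
orthogonal to a 2-dim span, then `x` lies in that span. -/
lemma perp_four_mem_span (v : Fin 4 → V6) (hv : LinearIndependent ℝ v)
    (s1 s2 : V6) (h12 : LinearIndependent ℝ ![s1, s2])
    (hs1 : ∀ i, form (v i) s1 = 0) (hs2 : ∀ i, form (v i) s2 = 0)
    (x : V6) (hx : ∀ i, form (v i) x = 0) :
    x ∈ Submodule.span ℝ ({s1, s2} : Set V6) := by
  classical
  set W : Submodule ℝ V6 := Submodule.span ℝ (Set.range v) with hW
  have hWrank : Module.finrank ℝ W = 4 := by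
    rw [hW, finrank_span_eq_card hv]; simp
  set K : Submodule ℝ V6 := B6.orthogonal W with hK
  have hmem : ∀ z : V6, (∀ i, form (v i) z = 0) → z ∈ K := by
    intro z hz
    rw [hK, LinearMap.BilinForm.mem_orthogonal_iff]
    intro n hn
    rw [hW] at hn
    induction hn using Submodule.span_induction with
    | mem y hy => obtain ⟨i, rfl⟩ := hy; exact hz i
    | zero => simp [LinearMap.BilinForm.IsOrtho]
    | add a b _ _ ha hb =>
        simp [map_add, LinearMap.add_apply, ha, hb]
    | smul c a _ ha =>
        simp [ha]
  have hKrank : Module.finrank ℝ K = 2 := by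
    rw [hK, LinearMap.BilinForm.finrank_orthogonal B6_nondegenerate, hWrank]
    simp
  have hle : Submodule.span ℝ ({s1, s2} : Set V6) ≤ K := by
    rw [Submodule.span_le]
    rintro z (rfl | rfl)
    · exact hmem _ hs1
    · exact hmem _ (by simpa using hs2)
  have hspanrank : Module.finrank ℝ (Submodule.span ℝ ({s1, s2} : Set V6)) = 2 := by
    rw [← range_pair s1 s2, finrank_span_eq_card h12]; simp
  have heq : Submodule.span ℝ ({s1, s2} : Set V6) = K :=
    Submodule.eq_of_le_of_finrank_le hle (by rw [hKrank, hspanrank])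
  rw [heq]
  exact hmem x hx

/-! ### Maximal isotropic planes -/

lemma range_pair' (s1 s2 : Fin 2 → ℝ) : Set.range ![s1, s2] = {s1, s2} := by
  ext z; simp [Matrix.range_cons, Matrix.range_empty]; tauto

set_option maxHeartbeats 1000000 in
/-- A vector orthogonal to a maximal isotropic 2-plane with zero norm lies in the plane. -/
lemma isotropic_perp_null_mem (s1 s2 x : V6)
    (hind : LinearIndependent ℝ ![s1, s2])
    (h11 : form s1 s1 = 0) (h12 : form s1 s2 = 0) (h22 : form s2 s2 = 0)
    (hx1 : form s1 x = 0) (hx2 : form s2 x = 0) (hxx : form x x = 0) :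
    x ∈ Submodule.span ℝ ({s1, s2} : Set V6) := by
  classical
  set α : Fin 2 → ℝ := ![s1 4, s1 5] with hα
  set β : Fin 2 → ℝ := ![s2 4, s2 5] with hβ
  have hindV : ∀ g0 g1 : ℝ, g0 • s1 + g1 • s2 = 0 → g0 = 0 ∧ g1 = 0 := by
    intro g0 g1 hg
    have := Fintype.linearIndependent_iff.1 hind ![g0, g1] (by
      simp [Fin.sum_univ_two]; exact hg)
    exact ⟨this 0, this 1⟩
  have hindαβ : LinearIndependent ℝ ![α, β] := by
    rw [Fintype.linearIndependent_iff]
    intro g hg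
    have hsum : g 0 • α + g 1 • β = 0 := by
      simpa [Fin.sum_univ_two] using hg
    set w : V6 := g 0 • s1 + g 1 • s2 with hw
    have hw4 : w 4 = 0 := by
      have := congrFun hsum 0
      simpa [hw, hα, hβ] using this
    have hw5 : w 5 = 0 := by
      have := congrFun hsum 1
      simpa [hw, hα, hβ] using this
    have hww : form w w = 0 := by
      simp only [hw, form, Pi.add_apply, Pi.smul_apply, smul_eq_mul]
      simp only [form] at h11 h12 h22
      linear_combination (g 0 ^ 2) * h11 + (2 * g 0 * g 1) * h12 + (g 1 ^ 2) * h22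
    have hsq : w 0 ^ 2 + w 1 ^ 2 + w 2 ^ 2 + w 3 ^ 2 = 0 := by
      simp only [form, hw4, hw5] at hww
      nlinarith [hww]
    have hz : ∀ j : Fin 6, j = 0 ∨ j = 1 ∨ j = 2 ∨ j = 3 → w j = 0 := by
      intro j hj
      have hsq' : w j ^ 2 = 0 := by
        rcases hj with rfl | rfl | rfl | rfl <;>
          nlinarith [hsq, sq_nonneg (w 0), sq_nonneg (w 1), sq_nonneg (w 2), sq_nonneg (w 3)]
      exact pow_eq_zero_iff two_ne_zero |>.1 hsq'
    have hw0 : w = 0 := by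
      funext i
      fin_cases i
      · exact hz 0 (by norm_num)
      · exact hz 1 (by norm_num)
      · exact hz 2 (by norm_num)
      · exact hz 3 (by norm_num)
      · exact hw4
      · exact hw5
    obtain ⟨e0, e1⟩ := hindV (g 0) (g 1) (by rw [← hw]; exact hw0)
    intro i; fin_cases i <;> assumption
  have hspan : Submodule.span ℝ ({α, β} : Set (Fin 2 → ℝ)) = ⊤ := by
    rw [← range_pair']
    exact hindαβ.span_eq_top_of_card_eq_finrank (by simp)
  have hξ : (![x 4, x 5] : Fin 2 → ℝ) ∈ Submodule.span ℝ ({α, β} : Set (Fin 2 → ℝ)) := by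
    rw [hspan]; trivial
  obtain ⟨c, d, hcd⟩ := Submodule.mem_span_pair.1 hξ
  set x' : V6 := x - c • s1 - d • s2 with hx'
  have hx'4 : x' 4 = 0 := by
    have := congrFun hcd 0
    simp [hα, hβ] at this
    simp [hx']
    linarith
  have hx'5 : x' 5 = 0 := by
    have := congrFun hcd 1
    simp [hα, hβ] at this
    simp [hx']
    linarith
  have hx'x' : form x' x' = 0 := by
    simp only [hx', form, Pi.sub_apply, Pi.smul_apply, smul_eq_mul]
    simp only [form] at hxx hx1 hx2 h11 h12 h22
    linear_combination hxx - (2 * c) * hx1 - (2 * d) * hx2 + (c ^ 2) * h11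
      + (2 * c * d) * h12 + (d ^ 2) * h22
  have hsq : x' 0 ^ 2 + x' 1 ^ 2 + x' 2 ^ 2 + x' 3 ^ 2 = 0 := by
    simp only [form, hx'4, hx'5] at hx'x'
    nlinarith [hx'x']
  have hz : ∀ j : Fin 6, j = 0 ∨ j = 1 ∨ j = 2 ∨ j = 3 → x' j = 0 := by
    intro j hj
    have hsq' : x' j ^ 2 = 0 := by
      rcases hj with rfl | rfl | rfl | rfl <;>
        nlinarith [hsq, sq_nonneg (x' 0), sq_nonneg (x' 1), sq_nonneg (x' 2), sq_nonneg (x' 3)]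
    exact pow_eq_zero_iff two_ne_zero |>.1 hsq'
  have hx'0 : x' = 0 := by
    funext i
    fin_cases i
    · exact hz 0 (by norm_num)
    · exact hz 1 (by norm_num)
    · exact hz 2 (by norm_num)
    · exact hz 3 (by norm_num)
    · exact hx'4
    · exact hx'5
  refine Submodule.mem_span_pair.2 ⟨c, d, ?_⟩
  funext i
  have h := congrFun hx'0 i
  simp only [hx', Pi.sub_apply, Pi.zero_apply] at h
  simp only [Pi.add_apply, Pi.smul_apply, smul_eq_mul] at *
  linarith

/-! ### Calculus auxiliary lemmas -/

open ContinuousLinearMap in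
/-- Product rule for `form`. -/
lemma hasFDerivAt_form (f g : ℝ × ℝ → V6) (p : ℝ × ℝ)
    (hf : DifferentiableAt ℝ f p) (hg : DifferentiableAt ℝ g p) :
    HasFDerivAt (fun q => form (f q) (g q))
      (((((f p 0 • ((proj 0).comp (fderiv ℝ g p)) + g p 0 • ((proj 0).comp (fderiv ℝ f p)))
        + (f p 1 • ((proj 1).comp (fderiv ℝ g p)) + g p 1 • ((proj 1).comp (fderiv ℝ f p))))
        + (f p 2 • ((proj 2).comp (fderiv ℝ g p)) + g p 2 • ((proj 2).comp (fderiv ℝ f p))))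
        + (f p 3 • ((proj 3).comp (fderiv ℝ g p)) + g p 3 • ((proj 3).comp (fderiv ℝ f p))))
        - (f p 4 • ((proj 4).comp (fderiv ℝ g p)) + g p 4 • ((proj 4).comp (fderiv ℝ f p)))
        - (f p 5 • ((proj 5).comp (fderiv ℝ g p)) + g p 5 • ((proj 5).comp (fderiv ℝ f p)))) p := by
  have hfc : ∀ i : Fin 6, HasFDerivAt (fun q => f q i)
      ((proj i).comp (fderiv ℝ f p)) p := hasFDerivAt_pi'.1 hf.hasFDerivAt
  have hgc : ∀ i : Fin 6, HasFDerivAt (fun q => g q i)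
      ((proj i).comp (fderiv ℝ g p)) p := hasFDerivAt_pi'.1 hg.hasFDerivAt
  have hmul : ∀ i : Fin 6, HasFDerivAt (fun q => f q i * g q i)
      (f p i • ((proj i).comp (fderiv ℝ g p)) + g p i • ((proj i).comp (fderiv ℝ f p))) p :=
    fun i => (hfc i).mul (hgc i)
  exact ((((((hmul 0).add (hmul 1)).add (hmul 2)).add (hmul 3)).sub (hmul 4)).sub (hmul 5))

/-- directional derivative of `q ↦ form (f q) (g q)`. -/
lemma fderiv_form_apply (f g : ℝ × ℝ → V6) (p : ℝ × ℝ)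
    (hf : DifferentiableAt ℝ f p) (hg : DifferentiableAt ℝ g p) (w : ℝ × ℝ) :
    fderiv ℝ (fun q => form (f q) (g q)) p w
      = form (fderiv ℝ f p w) (g p) + form (f p) (fderiv ℝ g p w) := by
  rw [(hasFDerivAt_form f g p hf hg).fderiv]
  simp [form, ContinuousLinearMap.sub_apply, ContinuousLinearMap.add_apply,
    ContinuousLinearMap.smul_apply, ContinuousLinearMap.comp_apply, ContinuousLinearMap.proj_apply]
  ring

/-- derivative of a 2×2 minor. -/
lemma fderiv_minor (f g : ℝ × ℝ → V6) (p : ℝ × ℝ)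
    (hf : DifferentiableAt ℝ f p) (hg : DifferentiableAt ℝ g p) (i j : Fin 6) (w : ℝ × ℝ) :
    fderiv ℝ (fun q => f q i * g q j - f q j * g q i) p w
      = (fderiv ℝ f p w i * g p j + f p i * fderiv ℝ g p w j)
        - (fderiv ℝ f p w j * g p i + f p j * fderiv ℝ g p w i) := by
  have hfc := hasFDerivAt_pi'.1 hf.hasFDerivAt
  have hgc := hasFDerivAt_pi'.1 hg.hasFDerivAt
  have H := ((hfc i).mul (hgc j)).sub ((hfc j).mul (hgc i))
  rw [show (fun q => f q i * g q j - f q j * g q i) = ((fun x => f x i) * fun x => g x j) - (fun x => f x j) * fun x => g x i from rfl, H.fderiv]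
  simp [ContinuousLinearMap.sub_apply, ContinuousLinearMap.add_apply,
    ContinuousLinearMap.smul_apply, ContinuousLinearMap.comp_apply, ContinuousLinearMap.proj_apply]
  ring

lemma fderiv_sum_smul (m : ℕ) (t : ℝ) (P : ℕ → ℝ × ℝ → V6) (p : ℝ × ℝ)
    (h : ∀ k < m, DifferentiableAt ℝ (P k) p) (w : ℝ × ℝ) :
    fderiv ℝ (fun q => ∑ k ∈ Finset.range m, t ^ k • P k q) p w
      = ∑ k ∈ Finset.range m, t ^ k • fderiv ℝ (P k) p w := by
  have H : HasFDerivAt (fun q => ∑ k ∈ Finset.range m, t ^ k • P k q)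
      (∑ k ∈ Finset.range m, t ^ k • fderiv ℝ (P k) p) p :=
    HasFDerivAt.fun_sum (fun k hk => ((h k (Finset.mem_range.1 hk)).hasFDerivAt.const_smul (t ^ k)))
  rw [H.fderiv]
  simp

lemma fderiv_zero_of_eq_zero_on {r : ℝ × ℝ → ℝ} {W : Set (ℝ × ℝ)} (hW : IsOpen W)
    (h : ∀ q ∈ W, r q = 0) {p : ℝ × ℝ} (hp : p ∈ W) (w : ℝ × ℝ) :
    fderiv ℝ r p w = 0 := by
  have hev : r =ᶠ[nhds p] (fun _ => (0 : ℝ)) :=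
    Filter.eventually_of_mem (hW.mem_nhds hp) h
  rw [hev.fderiv_eq, fderiv_fun_const]
  simp

/-! ### The main theorem -/

/-- An `Ω₀`-surface (with middle potential `η_u = σ₁ ∧ ∂_uσ₁`, `η_v = −σ₁ ∧ ∂_vσ₁`)
admitting a polynomial conserved quantity `p(t) = Σ t^k p_k` of `d + tη` is a
channel surface with circular curvature direction `∂_u`. -/
theorem omega0_with_polynomial_conserved_quantity_is_channel
    (U : Set (ℝ × ℝ)) (σ₁ σ₂ : ℝ × ℝ → V6)
    (hL : IsLegendre U σ₁ σ₂)
    (hgen : ∀ p ∈ U, LinearIndependent ℝ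
      ![σ₁ p, σ₂ p, pv σ₁ p, pu σ₂ p, pu (pu σ₂) p])
    (d : ℕ) (P : ℕ → (ℝ × ℝ → V6))
    (hPsmooth : ∀ k ≤ d, ContDiffOn ℝ (⊤ : ℕ∞) (P k) U)
    (hPd : ∀ p ∈ U, P d p ≠ 0)
    (hcons_u : ∀ t : ℝ, ∀ p ∈ U,
      pu (fun q => ∑ k ∈ Finset.range (d + 1), t ^ k • P k q) p
        + t • wedge (σ₁ p) (pu σ₁ p)
            (∑ k ∈ Finset.range (d + 1), t ^ k • P k p) = 0)
    (hcons_v : ∀ t : ℝ, ∀ p ∈ U,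
      pv (fun q => ∑ k ∈ Finset.range (d + 1), t ^ k • P k q) p
        - t • wedge (σ₁ p) (pv σ₁ p)
            (∑ k ∈ Finset.range (d + 1), t ^ k • P k p) = 0) :
    ∀ p ∈ U, pu σ₁ p ∈ Submodule.span ℝ ({σ₁ p} : Set V6) := by
  classical
  have hUopen := hL.open_U
  -- basic differentiability
  have hd1 : ∀ q ∈ U, DifferentiableAt ℝ σ₁ q := fun q hq =>
    ((hL.smooth₁.differentiableOn (by simp)) q hq).differentiableAt (hUopen.mem_nhds hq)
  have hd2 : ∀ q ∈ U, DifferentiableAt ℝ σ₂ q := fun q hq =>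
    ((hL.smooth₂.differentiableOn (by simp)) q hq).differentiableAt (hUopen.mem_nhds hq)
  have hdP : ∀ k ≤ d, ∀ q ∈ U, DifferentiableAt ℝ (P k) q := fun k hk q hq =>
    (((hPsmooth k hk).differentiableOn (by simp)) q hq).differentiableAt (hUopen.mem_nhds hq)
  have hfd2cd : ContDiffOn ℝ (⊤ : ℕ∞) (fderiv ℝ σ₂) U :=
    hL.smooth₂.fderiv_of_isOpen hUopen (by simp)
  have hd2u : ∀ q ∈ U, DifferentiableAt ℝ (pu σ₂) q := by
    intro q hq
    have h1 : DifferentiableAt ℝ (fderiv ℝ σ₂) q :=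
      ((hfd2cd.differentiableOn (by simp)) q hq).differentiableAt (hUopen.mem_nhds hq)
    exact (ContinuousLinearMap.apply ℝ V6 ((1 : ℝ), (0 : ℝ))).differentiableAt.comp q h1
  -- the penultimate coefficient function
  set Qf : ℝ × ℝ → V6 := fun q => if d = 0 then 0 else P (d - 1) q with hQf
  -- extraction of the conserved-quantity equations
  have hkey : ∀ q ∈ U, ∀ (w : ℝ × ℝ) (ε : ℝ),
      (∀ t : ℝ, (∑ k ∈ Finset.range (d + 1), t ^ k • fderiv ℝ (P k) q w)
        + (ε * t) • wedge (σ₁ q) (fderiv ℝ σ₁ q w)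
            (∑ k ∈ Finset.range (d + 1), t ^ k • P k q) = 0) →
      ε • wedge (σ₁ q) (fderiv ℝ σ₁ q w) (P d q) = 0 ∧
      fderiv ℝ (P d) q w + ε • wedge (σ₁ q) (fderiv ℝ σ₁ q w) (Qf q) = 0 := by
    intro q hq w ε hpoly
    have h' : ∀ t : ℝ, (∑ k ∈ Finset.range (d + 1), t ^ k • fderiv ℝ (P k) q w)
        + (∑ k ∈ Finset.range (d + 1),
            t ^ (k + 1) • (ε • wedge (σ₁ q) (fderiv ℝ σ₁ q w) (P k q))) = 0 := by
      intro t
      have h0 := hpoly t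
      rw [wedge_sum_smul, Finset.smul_sum] at h0
      have e : ∑ k ∈ Finset.range (d + 1),
            t ^ (k + 1) • (ε • wedge (σ₁ q) (fderiv ℝ σ₁ q w) (P k q))
          = ∑ k ∈ Finset.range (d + 1),
            (ε * t) • (t ^ k • wedge (σ₁ q) (fderiv ℝ σ₁ q w) (P k q)) := by
        refine Finset.sum_congr rfl fun k _ => ?_
        rw [smul_smul, smul_smul]
        congr 1
        ring
      rw [e]
      exact h0
    obtain ⟨h1, h2⟩ := extract_coeffs d (fun k => fderiv ℝ (P k) q w)
      (fun k => ε • wedge (σ₁ q) (fderiv ℝ σ₁ q w) (P k q)) h'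
    refine ⟨h1, ?_⟩
    by_cases hd : d = 0
    · rw [if_pos hd] at h2
      simp only [hQf, if_pos hd, wedge_zero, smul_zero]
      simpa using h2
    · rw [if_neg hd] at h2
      simp only [hQf, if_neg hd]
      exact h2
  have hEU : ∀ q ∈ U, wedge (σ₁ q) (pu σ₁ q) (P d q) = 0 ∧
      fderiv ℝ (P d) q (1, 0) = -wedge (σ₁ q) (pu σ₁ q) (Qf q) := by
    intro q hq
    have hc : ∀ t : ℝ, (∑ k ∈ Finset.range (d + 1), t ^ k • fderiv ℝ (P k) q (1, 0))
        + ((1 : ℝ) * t) • wedge (σ₁ q) (fderiv ℝ σ₁ q (1, 0))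
            (∑ k ∈ Finset.range (d + 1), t ^ k • P k q) = 0 := by
      intro t
      have h0 := hcons_u t q hq
      simp only [pu] at h0
      rw [fderiv_sum_smul (d + 1) t P q (fun k hk => hdP k (by omega) q hq) (1, 0)] at h0
      rw [one_mul]
      exact h0
    obtain ⟨h1, h2⟩ := hkey q hq (1, 0) 1 hc
    refine ⟨by simpa [pu] using h1, ?_⟩
    have h2' : fderiv ℝ (P d) q (1, 0) + wedge (σ₁ q) (pu σ₁ q) (Qf q) = 0 := by
      simpa [pu] using h2
    exact eq_neg_of_add_eq_zero_left h2'
  have hEV : ∀ q ∈ U, wedge (σ₁ q) (pv σ₁ q) (P d q) = 0 ∧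
      fderiv ℝ (P d) q (0, 1) = wedge (σ₁ q) (pv σ₁ q) (Qf q) := by
    intro q hq
    have hc : ∀ t : ℝ, (∑ k ∈ Finset.range (d + 1), t ^ k • fderiv ℝ (P k) q (0, 1))
        + ((-1 : ℝ) * t) • wedge (σ₁ q) (fderiv ℝ σ₁ q (0, 1))
            (∑ k ∈ Finset.range (d + 1), t ^ k • P k q) = 0 := by
      intro t
      have h0 := hcons_v t q hq
      simp only [pv] at h0
      rw [fderiv_sum_smul (d + 1) t P q (fun k hk => hdP k (by omega) q hq) (0, 1)] at h0
      have : ((-1 : ℝ) * t) • wedge (σ₁ q) (fderiv ℝ σ₁ q (0, 1))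
            (∑ k ∈ Finset.range (d + 1), t ^ k • P k q)
          = -(t • wedge (σ₁ q) (fderiv ℝ σ₁ q (0, 1))
            (∑ k ∈ Finset.range (d + 1), t ^ k • P k q)) := by
        rw [neg_one_mul, neg_smul]
      rw [this]
      rw [sub_eq_add_neg] at h0
      exact h0
    obtain ⟨h1, h2⟩ := hkey q hq (0, 1) (-1) hc
    have h1' : wedge (σ₁ q) (pv σ₁ q) (P d q) = 0 := by
      have := h1
      simp only [pv, neg_smul, one_smul, neg_eq_zero] at this ⊢
      exact this
    refine ⟨h1', ?_⟩
    have h2' : fderiv ℝ (P d) q (0, 1) - wedge (σ₁ q) (pv σ₁ q) (Qf q) = 0 := by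
      have := h2
      simp only [pv, neg_smul, one_smul, ← sub_eq_add_neg] at this
      exact this
    exact sub_eq_zero.1 h2'
  -- the facts `wedge = 0` and the derivative formulas
  have hWU : ∀ q ∈ U, wedge (σ₁ q) (pu σ₁ q) (P d q) = 0 := fun q hq => (hEU q hq).1
  have hWV : ∀ q ∈ U, wedge (σ₁ q) (pv σ₁ q) (P d q) = 0 := fun q hq => (hEV q hq).1
  have hDU : ∀ q ∈ U, fderiv ℝ (P d) q (1, 0) = -wedge (σ₁ q) (pu σ₁ q) (Qf q) :=
    fun q hq => (hEU q hq).2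
  have hDV : ∀ q ∈ U, fderiv ℝ (P d) q (0, 1) = wedge (σ₁ q) (pv σ₁ q) (Qf q) :=
    fun q hq => (hEV q hq).2
  -- nonvanishing of σ₁
  have hs1ne : ∀ q ∈ U, σ₁ q ≠ 0 := by
    intro q hq
    have := (hL.indep q hq).ne_zero 0
    simpa using this
  have hspan1le : ∀ q : ℝ × ℝ, Submodule.span ℝ ({σ₁ q} : Set V6) ≤ spanF σ₁ σ₂ q :=
    fun q => Submodule.span_mono (Set.singleton_subset_iff.2 (Set.mem_insert _ _))
  -- first-order orthogonality facts on U
  have F2u : ∀ q ∈ U, form (σ₁ q) (pu σ₁ q) = 0 := by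
    intro q hq
    have h := fderiv_zero_of_eq_zero_on (r := fun r => form (σ₁ r) (σ₁ r)) hUopen (fun r hr => hL.iso₁₁ r hr) hq (1, 0)
    rw [fderiv_form_apply σ₁ σ₁ q (hd1 q hq) (hd1 q hq) (1, 0)] at h
    have hs := form_symm (fderiv ℝ σ₁ q (1, 0)) (σ₁ q)
    simp only [pu]
    linarith
  have F2v : ∀ q ∈ U, form (σ₁ q) (pv σ₁ q) = 0 := by
    intro q hq
    have h := fderiv_zero_of_eq_zero_on (r := fun r => form (σ₁ r) (σ₁ r)) hUopen (fun r hr => hL.iso₁₁ r hr) hq (0, 1)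
    rw [fderiv_form_apply σ₁ σ₁ q (hd1 q hq) (hd1 q hq) (0, 1)] at h
    have hs := form_symm (fderiv ℝ σ₁ q (0, 1)) (σ₁ q)
    simp only [pv]
    linarith
  have F3 : ∀ q ∈ U, form (σ₁ q) (pu σ₂ q) = 0 := by
    intro q hq
    have h := fderiv_zero_of_eq_zero_on (r := fun r => form (σ₁ r) (σ₂ r)) hUopen (fun r hr => hL.iso₁₂ r hr) hq (1, 0)
    rw [fderiv_form_apply σ₁ σ₂ q (hd1 q hq) (hd2 q hq) (1, 0)] at h
    have hcu := hL.contact_u q hq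
    simp only [pu] at hcu ⊢
    linarith
  have F3' : ∀ q ∈ U, form (σ₂ q) (pu σ₂ q) = 0 := by
    intro q hq
    have h := fderiv_zero_of_eq_zero_on (r := fun r => form (σ₂ r) (σ₂ r)) hUopen (fun r hr => hL.iso₂₂ r hr) hq (1, 0)
    rw [fderiv_form_apply σ₂ σ₂ q (hd2 q hq) (hd2 q hq) (1, 0)] at h
    have hs := form_symm (fderiv ℝ σ₂ q (1, 0)) (σ₂ q)
    simp only [pu]
    linarith
  -- anything in the contact plane is orthogonal to pu σ₂
  have horth : ∀ q ∈ U, ∀ x ∈ spanF σ₁ σ₂ q, form x (pu σ₂ q) = 0 := by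
    intro q hq x hx
    exact form_span_pair_zero hx (F3 q hq) (F3' q hq)
  -- second-order facts
  have F4 : ∀ q ∈ U, form (σ₁ q) (pu (pu σ₂) q) = 0 := by
    intro q hq
    have h := fderiv_zero_of_eq_zero_on (r := fun r => form (σ₁ r) (pu σ₂ r)) hUopen (fun r hr => F3 r hr) hq (1, 0)
    rw [fderiv_form_apply σ₁ (pu σ₂) q (hd1 q hq) (hd2u q hq) (1, 0)] at h
    have h1 : form (fderiv ℝ σ₁ q (1, 0)) (pu σ₂ q) = 0 :=
      horth q hq _ (by simpa only [pu] using hL.curv₁ q hq)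
    simp only [pu] at h h1 ⊢
    linarith
  have F5 : ∀ q ∈ U, form (σ₂ q) (pu (pu σ₂) q) = -form (pu σ₂ q) (pu σ₂ q) := by
    intro q hq
    have h := fderiv_zero_of_eq_zero_on (r := fun r => form (σ₂ r) (pu σ₂ r)) hUopen (fun r hr => F3' r hr) hq (1, 0)
    rw [fderiv_form_apply σ₂ (pu σ₂) q (hd2 q hq) (hd2u q hq) (1, 0)] at h
    simp only [pu] at h ⊢
    linarith
  -- orthogonality of P d to σ₁, pv σ₁, pu σ₁ on all of U
  have hPd1 : ∀ q ∈ U, form (σ₁ q) (P d q) = 0 := by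
    intro q hq
    by_contra hne
    have heq : form (σ₁ q) (P d q) • pv σ₁ q = form (pv σ₁ q) (P d q) • σ₁ q :=
      sub_eq_zero.1 (hWV q hq)
    have : pv σ₁ q = ((form (σ₁ q) (P d q))⁻¹ * form (pv σ₁ q) (P d q)) • σ₁ q := by
      rw [mul_smul, ← heq, smul_smul, inv_mul_cancel₀ hne, one_smul]
    exact hL.umb₁ q hq (this ▸ Submodule.smul_mem _ _
      (Submodule.subset_span (Set.mem_insert _ _)))
  have hPdv : ∀ q ∈ U, form (pv σ₁ q) (P d q) = 0 := by
    intro q hq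
    have heq : form (σ₁ q) (P d q) • pv σ₁ q - form (pv σ₁ q) (P d q) • σ₁ q = 0 := hWV q hq
    rw [hPd1 q hq, zero_smul, zero_sub, neg_eq_zero] at heq
    rcases smul_eq_zero.1 heq with h | h
    · exact h
    · exact absurd h (hs1ne q hq)
  have hPdu : ∀ q ∈ U, form (pu σ₁ q) (P d q) = 0 := by
    intro q hq
    have heq : form (σ₁ q) (P d q) • pu σ₁ q - form (pu σ₁ q) (P d q) • σ₁ q = 0 := hWU q hq
    rw [hPd1 q hq, zero_smul, zero_sub, neg_eq_zero] at heq
    rcases smul_eq_zero.1 heq with h | h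
    · exact h
    · exact absurd h (hs1ne q hq)
  -- Case 1: where form (σ₂ q) (P d q) ≠ 0 the claim holds
  have case1 : ∀ q ∈ U, form (σ₂ q) (P d q) ≠ 0 →
      pu σ₁ q ∈ Submodule.span ℝ ({σ₁ q} : Set V6) := by
    intro q hq hne
    obtain ⟨a, b, hab⟩ := Submodule.mem_span_pair.1 (hL.curv₁ q hq)
    have h0 := hPdu q hq
    rw [← hab] at h0
    have hexp : a * form (σ₁ q) (P d q) + b * form (σ₂ q) (P d q) = 0 := by
      simp only [form, Pi.add_apply, Pi.smul_apply, smul_eq_mul] at h0 ⊢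
      linear_combination h0
    rw [hPd1 q hq, mul_zero, zero_add] at hexp
    have hb : b = 0 := by
      rcases mul_eq_zero.1 hexp with h | h
      · exact h
      · exact absurd h hne
    rw [Submodule.mem_span_singleton]
    exact ⟨a, by rw [← hab, hb, zero_smul, add_zero]⟩
  -- continuity of the key scalar function
  have hGcont : ContinuousOn (fun r => form (σ₂ r) (P d r)) U := fun r hr =>
    ((hasFDerivAt_form σ₂ (P d) r (hd2 r hr)
      (hdP d le_rfl r hr)).differentiableAt.continuousAt).continuousWithinAt
  -- now the main case distinction
  intro p hp
  by_cases hGp : form (σ₂ p) (P d p) ≠ 0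
  · exact case1 p hp hGp
  push_neg at hGp
  set Z : Set (ℝ × ℝ) := {r | r ∈ U ∧ form (σ₂ r) (P d r) = 0} with hZ
  by_cases hints : p ∈ interior Z
  · -- Case 2 : p in the interior of the zero set
    set W1 : Set (ℝ × ℝ) := interior Z with hW1
    have hW1U : W1 ⊆ U := fun r hr => (interior_subset hr).1
    have hGzero : ∀ r ∈ W1, form (σ₂ r) (P d r) = 0 := fun r hr => (interior_subset hr).2
    -- first derived orthogonality on W1
    have hb : ∀ r ∈ W1, form (pu σ₂ r) (P d r) = 0 := by
      intro r hr
      have hrU : r ∈ U := hW1U hr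
      have h := fderiv_zero_of_eq_zero_on (r := fun s => form (σ₂ s) (P d s))
        isOpen_interior hGzero hr (1, 0)
      rw [fderiv_form_apply σ₂ (P d) r (hd2 r hrU) (hdP d le_rfl r hrU) (1, 0)] at h
      rw [hDU r hrU, form_neg_right, form_wedge_right] at h
      have e1 : form (σ₂ r) (pu σ₁ r) = 0 := by rw [form_symm]; exact hL.contact_u r hrU
      have e2 : form (σ₂ r) (σ₁ r) = 0 := by rw [form_symm]; exact hL.iso₁₂ r hrU
      simp only [pu] at h e1 ⊢
      rw [e1, e2] at h
      simp at h
      linarith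
    -- second derived orthogonality on W1
    have hc2 : ∀ r ∈ W1, form (pu (pu σ₂) r) (P d r) = 0 := by
      intro r hr
      have hrU : r ∈ U := hW1U hr
      have h := fderiv_zero_of_eq_zero_on (r := fun s => form (pu σ₂ s) (P d s))
        isOpen_interior hb hr (1, 0)
      rw [fderiv_form_apply (pu σ₂) (P d) r (hd2u r hrU) (hdP d le_rfl r hrU) (1, 0)] at h
      rw [hDU r hrU, form_neg_right, form_wedge_right] at h
      have e1 : form (pu σ₂ r) (pu σ₁ r) = 0 := by
        rw [form_symm]
        exact horth r hrU _ (hL.curv₁ r hrU)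
      have e2 : form (pu σ₂ r) (σ₁ r) = 0 := by rw [form_symm]; exact F3 r hrU
      simp only [pu] at h e1 e2 ⊢
      rw [e1, e2] at h
      simp at h
      linarith
    -- P d lies in the contact plane on W1
    have hmemPd : ∀ r ∈ W1, P d r ∈ Submodule.span ℝ ({σ₁ r, σ₂ r} : Set V6) := by
      intro r hr
      have hrU : r ∈ U := hW1U hr
      have h5 := hgen r hrU
      have h4 : LinearIndependent ℝ ![σ₁ r, σ₂ r, pv σ₁ r, pu σ₂ r] := by
        have hcomp := h5.comp (Fin.castSucc : Fin 4 → Fin 5) (Fin.castSucc_injective 4)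
        have heq : (![σ₁ r, σ₂ r, pv σ₁ r, pu σ₂ r, pu (pu σ₂) r]
            ∘ (Fin.castSucc : Fin 4 → Fin 5)) = ![σ₁ r, σ₂ r, pv σ₁ r, pu σ₂ r] := by
          funext i
          fin_cases i <;> rfl
        rwa [heq] at hcomp
      refine perp_four_mem_span ![σ₁ r, σ₂ r, pv σ₁ r, pu σ₂ r] h4 (σ₁ r) (σ₂ r)
        (hL.indep r hrU) ?_ ?_ (P d r) ?_
      · intro i
        fin_cases i
        · simpa using hL.iso₁₁ r hrU
        · simpa using (by rw [form_symm]; exact hL.iso₁₂ r hrU : form (σ₂ r) (σ₁ r) = 0)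
        · simpa using (by rw [form_symm]; exact F2v r hrU : form (pv σ₁ r) (σ₁ r) = 0)
        · simpa using (by rw [form_symm]; exact F3 r hrU : form (pu σ₂ r) (σ₁ r) = 0)
      · intro i
        fin_cases i
        · simpa using hL.iso₁₂ r hrU
        · simpa using hL.iso₂₂ r hrU
        · simpa using hL.contact_v r hrU
        · simpa using (by rw [form_symm]; exact F3' r hrU : form (pu σ₂ r) (σ₂ r) = 0)
      · intro i
        fin_cases i
        · simpa using hPd1 r hrU
        · simpa using hGzero r hr
        · simpa using hPdv r hrU
        · simpa using hb r hr
    -- P d is in fact a multiple of σ₁ on W1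
    have hPdalpha : ∀ r ∈ W1, ∃ α : ℝ, P d r = α • σ₁ r := by
      intro r hr
      have hrU : r ∈ U := hW1U hr
      obtain ⟨α, β, hαβ⟩ := Submodule.mem_span_pair.1 (hmemPd r hr)
      have hfz := hc2 r hr
      rw [← hαβ, form_add_right, form_smul_right, form_smul_right] at hfz
      have e1 : form (pu (pu σ₂) r) (σ₁ r) = 0 := by rw [form_symm]; exact F4 r hrU
      have e2 : form (pu (pu σ₂) r) (σ₂ r) = -form (pu σ₂ r) (pu σ₂ r) := by
        rw [form_symm]; exact F5 r hrU
      rw [e1, e2] at hfz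
      have hN : form (pu σ₂ r) (pu σ₂ r) ≠ 0 := by
        intro h0
        exact hL.umb₂ r hrU (isotropic_perp_null_mem (σ₁ r) (σ₂ r) (pu σ₂ r)
          (hL.indep r hrU) (hL.iso₁₁ r hrU) (hL.iso₁₂ r hrU) (hL.iso₂₂ r hrU)
          (F3 r hrU) (F3' r hrU) h0)
      have hβ : β = 0 := by
        have : β * form (pu σ₂ r) (pu σ₂ r) = 0 := by linarith
        rcases mul_eq_zero.1 this with h' | h'
        · exact h'
        · exact absurd h' hN
      exact ⟨α, by rw [← hαβ, hβ, zero_smul, add_zero]⟩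
    -- all minors of (P d, σ₁) vanish on W1
    have hminW1 : ∀ i j : Fin 6, ∀ r ∈ W1, P d r i * σ₁ r j - P d r j * σ₁ r i = 0 := by
      intro i j r hr
      obtain ⟨α, hα⟩ := hPdalpha r hr
      rw [hα]
      simp only [Pi.smul_apply, smul_eq_mul]
      ring
    have hpU : p ∈ U := hW1U hints
    obtain ⟨α, hα⟩ := hPdalpha p hints
    have hPdi : ∀ i : Fin 6, P d p i = α * σ₁ p i := by
      intro i
      have := congrFun hα i
      simpa [Pi.smul_apply, smul_eq_mul] using this
    -- v-direction minors derivative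
    have hAv : ∀ i j : Fin 6, (form (σ₁ p) (Qf p) - α)
        * (pv σ₁ p i * σ₁ p j - pv σ₁ p j * σ₁ p i) = 0 := by
      intro i j
      have h0 := fderiv_zero_of_eq_zero_on
        (r := fun s => P d s i * σ₁ s j - P d s j * σ₁ s i)
        isOpen_interior (hminW1 i j) hints (0, 1)
      rw [fderiv_minor (P d) σ₁ p (hdP d le_rfl p hpU) (hd1 p hpU) i j (0, 1)] at h0
      rw [hDV p hpU] at h0
      simp only [wedge, Pi.sub_apply, Pi.smul_apply, smul_eq_mul] at h0
      simp only [pv] at h0 ⊢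
      linear_combination h0 - fderiv ℝ σ₁ p (0, 1) j * hPdi i + fderiv ℝ σ₁ p (0, 1) i * hPdi j
    -- some v-minor is nonzero since pv σ₁ ∉ f
    have hαv : form (σ₁ p) (Qf p) = α := by
      have hex : ∃ i j : Fin 6, pv σ₁ p i * σ₁ p j - pv σ₁ p j * σ₁ p i ≠ 0 := by
        by_contra hall
        push_neg at hall
        exact hL.umb₁ p hpU (hspan1le p (mem_span_of_minors (hs1ne p hpU) hall))
      obtain ⟨i, j, hne⟩ := hex
      rcases mul_eq_zero.1 (hAv i j) with h' | h'
      · linarith [sub_eq_zero.1 h']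
      · exact absurd h' hne
    -- u-direction minors derivative
    have hAu : ∀ i j : Fin 6, (form (σ₁ p) (Qf p) + α)
        * (pu σ₁ p i * σ₁ p j - pu σ₁ p j * σ₁ p i) = 0 := by
      intro i j
      have h0 := fderiv_zero_of_eq_zero_on
        (r := fun s => P d s i * σ₁ s j - P d s j * σ₁ s i)
        isOpen_interior (hminW1 i j) hints (1, 0)
      rw [fderiv_minor (P d) σ₁ p (hdP d le_rfl p hpU) (hd1 p hpU) i j (1, 0)] at h0
      rw [hDU p hpU] at h0
      simp only [wedge, Pi.neg_apply, Pi.sub_apply, Pi.smul_apply, smul_eq_mul] at h0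
      simp only [pu] at h0 ⊢
      linear_combination -h0 + fderiv ℝ σ₁ p (1, 0) j * hPdi i - fderiv ℝ σ₁ p (1, 0) i * hPdi j
    by_cases hminu : ∀ i j : Fin 6, pu σ₁ p i * σ₁ p j - pu σ₁ p j * σ₁ p i = 0
    · exact mem_span_of_minors (hs1ne p hpU) hminu
    · push_neg at hminu
      obtain ⟨i, j, hne⟩ := hminu
      have hsum : form (σ₁ p) (Qf p) + α = 0 := by
        rcases mul_eq_zero.1 (hAu i j) with h' | h'
        · exact h'
        · exact absurd h' hne
      have hα0 : α = 0 := by rw [hαv] at hsum; linarith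
      exact absurd (by rw [hα, hα0, zero_smul] : P d p = 0) (hPd p hp)
  · -- Case 3: boundary points, by continuity
    set Wne : Set (ℝ × ℝ) := {r | r ∈ U ∧ form (σ₂ r) (P d r) ≠ 0} with hWne
    have hWneU : Wne ⊆ U := fun r hr => hr.1
    have hclos : p ∈ closure Wne := by
      by_contra hcl
      apply hints
      rw [mem_interior]
      refine ⟨U \ closure Wne, ?_, hUopen.sdiff isClosed_closure, ⟨hp, hcl⟩⟩
      intro r hr
      refine ⟨hr.1, ?_⟩
      by_contra hne
      exact hr.2 (subset_closure ⟨hr.1, hne⟩)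
    have hminWne : ∀ i j : Fin 6, ∀ r ∈ Wne, pu σ₁ r i * σ₁ r j - pu σ₁ r j * σ₁ r i = 0 := by
      intro i j r hr
      obtain ⟨a, ha⟩ := Submodule.mem_span_singleton.1 (case1 r hr.1 hr.2)
      rw [← ha]
      simp only [Pi.smul_apply, smul_eq_mul]
      ring
    have hcont1 : ContinuousOn (fderiv ℝ σ₁) U :=
      hL.smooth₁.continuousOn_fderiv_of_isOpen hUopen (by simp)
    have hcontpu : ContinuousOn (pu σ₁) U :=
      (ContinuousLinearMap.apply ℝ V6 ((1 : ℝ), (0 : ℝ))).continuous.comp_continuousOn hcont1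
    have hcontm : ∀ i j : Fin 6,
        ContinuousOn (fun r => pu σ₁ r i * σ₁ r j - pu σ₁ r j * σ₁ r i) U := by
      intro i j
      have e1 : ContinuousOn (fun r => pu σ₁ r i) U :=
        (continuous_apply i).comp_continuousOn hcontpu
      have e1' : ContinuousOn (fun r => pu σ₁ r j) U :=
        (continuous_apply j).comp_continuousOn hcontpu
      have e2 : ContinuousOn (fun r => σ₁ r j) U :=
        (continuous_apply j).comp_continuousOn (hL.smooth₁.continuousOn)
      have e2' : ContinuousOn (fun r => σ₁ r i) U :=
        (continuous_apply i).comp_continuousOn (hL.smooth₁.continuousOn)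
      exact (e1.mul e2).sub (e1'.mul e2')
    have hmin0 : ∀ i j : Fin 6, pu σ₁ p i * σ₁ p j - pu σ₁ p j * σ₁ p i = 0 := by
      intro i j
      have hnb : (nhdsWithin p Wne).NeBot := mem_closure_iff_nhdsWithin_neBot.1 hclos
      have h1 : Filter.Tendsto (fun r => pu σ₁ r i * σ₁ r j - pu σ₁ r j * σ₁ r i)
          (nhdsWithin p Wne) (nhds (pu σ₁ p i * σ₁ p j - pu σ₁ p j * σ₁ p i)) :=
        ((hcontm i j) p hp).mono hWneU
      have h2 : Filter.Tendsto (fun r => pu σ₁ r i * σ₁ r j - pu σ₁ r j * σ₁ r i)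
          (nhdsWithin p Wne) (nhds 0) := by
        refine Filter.Tendsto.congr' ?_ tendsto_const_nhds
        filter_upwards [self_mem_nhdsWithin] with r hr
        exact (hminWne i j r hr).symm
      exact tendsto_nhds_unique h1 h2
    exact mem_span_of_minors (hs1ne p hp) hmin0
end
end

section
/- Let (σ₁,σ₂) be a local umbilic-free Legendre map in curvature line coordinates on U with ∂_uσ₁ = 0 identically (a channel surface with normalized circular lift), let η_u := 0, η_v := σ₁ ∧ ∂_vσ₁, and fix t ∈ ℝ. Let T : U → GL(ℝ^6) be a smooth map with ⟨T(p)x, T(p)y⟩ = ⟨x,y⟩ for all p,x,y (values in O(4,2)) satisfying the trivializing gauge condition ∂_i T = −t T∘η_i for i ∈ {u,v} (equivalently, ∂_i(Tx) = T(∂_i x + tη_i x) for every smooth x : U → ℝ^6). Then σ₁ᵗ := Tσ₁, σ₂ᵗ := Tσ₂ is again a local umbilic-free Legendre map in the same curvature line coordinates (with curvature spheres span{σ₁ᵗ}, span{σ₂ᵗ} and curvature directions ∂_u, ∂_v), and ∂_uσ₁ᵗ = 0. Hence the Calapso transform fᵗ = T f is a channel surface with the same circular curvature direction ∂_u. -/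
noncomputable section

lemma form_zero_left (y : V6) : form 0 y = 0 := by simp [form]

lemma form_nondeg (x : V6) (h : ∀ y, form x y = 0) : x = 0 := by
  funext i
  fin_cases i
  · simpa [form, Pi.single_apply] using h (Pi.single 0 1)
  · simpa [form, Pi.single_apply] using h (Pi.single 1 1)
  · simpa [form, Pi.single_apply] using h (Pi.single 2 1)
  · simpa [form, Pi.single_apply] using h (Pi.single 3 1)
  · simpa [form, Pi.single_apply, neg_eq_zero, sub_eq_zero] using h (Pi.single 4 1)
  · simpa [form, Pi.single_apply, neg_eq_zero, sub_eq_zero] using h (Pi.single 5 1)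

lemma form_add_smul_left (a b c : V6) (s : ℝ) :
    form (a + s • b) c = form a c + s * form b c := by
  simp [form, Pi.add_apply, Pi.smul_apply, smul_eq_mul]; ring

lemma form_wedge_left (a b x y : V6) :
    form (wedge a b x) y = form a x * form b y - form b x * form a y := by
  simp [wedge, form, Pi.sub_apply, Pi.smul_apply, smul_eq_mul]; ring

lemma smooth_T_apply {U : Set (ℝ × ℝ)} (T : ℝ × ℝ → (V6 →ₗ[ℝ] V6))
    (hTsmooth : ∀ x : V6, ContDiffOn ℝ (⊤ : ℕ∞) (fun q => T q x) U)
    {σ : ℝ × ℝ → V6} (hσ : ContDiffOn ℝ (⊤ : ℕ∞) σ U) :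
    ContDiffOn ℝ (⊤ : ℕ∞) (fun q => T q (σ q)) U := by
  have key : ∀ q, T q (σ q) = ∑ j : Fin 6, σ q j • T q (Pi.single j 1) := by
    intro q
    have hx : σ q = ∑ j : Fin 6, (σ q j) • (Pi.single j 1 : V6) := by
      funext i
      rw [Finset.sum_apply]
      simp [Pi.single_apply]
    conv_lhs => rw [hx]
    rw [map_sum]
    simp [map_smul]
  refine ContDiffOn.congr ?_ (fun q _ => key q)
  apply ContDiffOn.sum
  intro j _
  exact ContDiffOn.smul
    ((ContinuousLinearMap.proj j : V6 →L[ℝ] ℝ).contDiff.comp_contDiffOn hσ)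
    (hTsmooth _)

/-- Calapso transforms of channel surfaces are channel surfaces with the same circular
curvature direction: if `∂_uσ₁ = 0`, `η_u = 0`, `η_v = σ₁ ∧ ∂_vσ₁`, and `T` is an
orthogonal trivialising gauge transformation of `d + tη` (so `∂_i(Tx) = T(∂_ix + tη_ix)`
for all smooth `x`), then `(Tσ₁, Tσ₂)` is again an umbilic-free Legendre map in the
same curvature line coordinates and `∂_u(Tσ₁) = 0`. -/
theorem calapso_transform_of_channel_is_channel
    (U : Set (ℝ × ℝ)) (σ₁ σ₂ : ℝ × ℝ → V6)
    (hL : IsLegendre U σ₁ σ₂)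
    (hchan : ∀ p ∈ U, pu σ₁ p = 0)
    (t : ℝ)
    (T : ℝ × ℝ → (V6 →ₗ[ℝ] V6))
    (hTsmooth : ∀ x : V6, ContDiffOn ℝ (⊤ : ℕ∞) (fun q => T q x) U)
    (hTorth : ∀ p ∈ U, ∀ x y : V6, form (T p x) (T p y) = form x y)
    (hgauge : ∀ x : ℝ × ℝ → V6, ContDiffOn ℝ (⊤ : ℕ∞) x U → ∀ p ∈ U,
      pu (fun q => T q (x q)) p = T p (pu x p + t • (0 : V6)) ∧
      pv (fun q => T q (x q)) p
        = T p (pv x p + t • wedge (σ₁ p) (pv σ₁ p) (x p))) :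
    IsLegendre U (fun q => T q (σ₁ q)) (fun q => T q (σ₂ q)) ∧
      ∀ p ∈ U, pu (fun q => T q (σ₁ q)) p = 0 := by
  -- injectivity of each T p
  have hinj : ∀ p ∈ U, Function.Injective (T p) := by
    intro p hp
    refine (injective_iff_map_eq_zero (T p)).mpr fun x hx => ?_
    refine form_nondeg x fun y => ?_
    have h := hTorth p hp x y
    rw [hx, form_zero_left] at h
    exact h.symm
  have hspan : ∀ p : ℝ × ℝ,
      spanF (fun q => T q (σ₁ q)) (fun q => T q (σ₂ q)) p
        = Submodule.map (T p) (spanF σ₁ σ₂ p) := by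
    intro p
    simp only [spanF, Submodule.map_span, Set.image_insert_eq, Set.image_singleton]
  have hσ₁mem : ∀ p : ℝ × ℝ, σ₁ p ∈ spanF σ₁ σ₂ p :=
    fun p => Submodule.subset_span (Set.mem_insert _ _)
  have hg₁ := hgauge σ₁ hL.smooth₁
  have hg₂ := hgauge σ₂ hL.smooth₂
  -- ∂_u(Tσ₁) = 0
  have hpu₁ : ∀ p ∈ U, pu (fun q => T q (σ₁ q)) p = 0 := by
    intro p hp
    rw [(hg₁ p hp).1, hchan p hp, smul_zero, add_zero, map_zero]
  -- value of the wedge on σ₁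
  have hwedge₁ : ∀ p ∈ U, wedge (σ₁ p) (pv σ₁ p) (σ₁ p)
      = -(form (pv σ₁ p) (σ₁ p)) • σ₁ p := by
    intro p hp
    simp only [wedge, hL.iso₁₁ p hp, zero_smul, zero_sub, neg_smul]
  -- value of the wedge on σ₂
  have hwedge₂ : ∀ p ∈ U, wedge (σ₁ p) (pv σ₁ p) (σ₂ p) = 0 := by
    intro p hp
    simp only [wedge, hL.iso₁₂ p hp, hL.contact_v p hp, zero_smul, sub_zero]
  have hpv₂ : ∀ p ∈ U, pv (fun q => T q (σ₂ q)) p = T p (pv σ₂ p) := by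
    intro p hp
    rw [(hg₂ p hp).2, hwedge₂ p hp, smul_zero, add_zero]
  refine ⟨⟨hL.open_U, smooth_T_apply T hTsmooth hL.smooth₁,
      smooth_T_apply T hTsmooth hL.smooth₂, ?_, ?_, ?_, ?_, ?_, ?_, ?_, ?_, ?_, ?_⟩,
      hpu₁⟩
  · -- indep
    intro p hp
    have h := (hL.indep p hp).map' (T p) (LinearMap.ker_eq_bot.mpr (hinj p hp))
    have : (T p) ∘ ![σ₁ p, σ₂ p] = ![T p (σ₁ p), T p (σ₂ p)] := by
      funext i; fin_cases i <;> rfl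
    rwa [this] at h
  · intro p hp; rw [hTorth p hp]; exact hL.iso₁₁ p hp
  · intro p hp; rw [hTorth p hp]; exact hL.iso₁₂ p hp
  · intro p hp; rw [hTorth p hp]; exact hL.iso₂₂ p hp
  · -- contact_u
    intro p hp
    rw [hpu₁ p hp, form_zero_left]
  · -- contact_v
    intro p hp
    rw [(hg₁ p hp).2, hTorth p hp, form_add_smul_left, form_wedge_left,
      hL.contact_v p hp, hL.iso₁₁ p hp, hL.iso₁₂ p hp]
    ring
  · -- curv₁
    intro p hp
    rw [hpu₁ p hp]
    exact Submodule.zero_mem _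
  · -- curv₂
    intro p hp
    rw [hpv₂ p hp, hspan p]
    exact Submodule.mem_map_of_mem (hL.curv₂ p hp)
  · -- umb₁
    intro p hp
    intro hmem
    rw [(hg₁ p hp).2, hwedge₁ p hp, hspan p] at hmem
    obtain ⟨y, hy, hTy⟩ := hmem
    have hy' : pv σ₁ p + t • -form (pv σ₁ p) (σ₁ p) • σ₁ p ∈ spanF σ₁ σ₂ p := by
      rwa [hinj p hp hTy] at hy
    have : pv σ₁ p ∈ spanF σ₁ σ₂ p := by
      have hx : pv σ₁ p
          = (pv σ₁ p + t • -form (pv σ₁ p) (σ₁ p) • σ₁ p)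
            - t • -form (pv σ₁ p) (σ₁ p) • σ₁ p := by abel
      rw [hx]
      exact Submodule.sub_mem _ hy'
        (Submodule.smul_mem _ _ (Submodule.smul_mem _ _ (hσ₁mem p)))
    exact hL.umb₁ p hp this
  · -- umb₂
    intro p hp
    intro hmem
    rw [(hg₂ p hp).1, smul_zero, add_zero, hspan p] at hmem
    obtain ⟨y, hy, hTy⟩ := hmem
    rw [hinj p hp hTy] at hy
    exact hL.umb₂ p hp hy
end
end

section
/- Let U = I×J be a product of open intervals and let (σ₁,σ₂) and (σ̂₁,σ̂₂) be two local umbilic-free Legendre maps in the same curvature line coordinates (u,v) on U (a Ribaucour pair), with f := span{σ₁,σ₂} ≠ f̂ := span{σ̂₁,σ̂₂} at every point and f(p) ∩ f̂(p) ≠ {0} at every point (common enveloped sphere congruence). Let D₁ := span{σ₁, σ̂₁, ∂_vσ₁} and assume at every point: dim D₁ = 3, f ∩ D₁ = span{σ₁} and f̂ ∩ D₁ = span{σ̂₁}. Then ∂_uσ₁ ∈ span{σ₁} and ∂_uσ̂₁ ∈ span{σ̂₁} at every point (both f and f̂ are channel surfaces with corresponding circular curvature direction T₁ = ∂_u) if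 and only if the Ribaucour cyclide congruence D₁ is constant along the leaves of T₁, i.e., D₁(u,v) = D₁(u',v) for all u,u' ∈ I and v ∈ J. -/
noncomputable section

/-- The Ribaucour cyclide congruence `D₁ = span{σ₁, σ̂₁, ∂_vσ₁}` of a Ribaucour pair. -/
def D₁ (σ₁ τ₁ : ℝ × ℝ → V6) (p : ℝ × ℝ) : Submodule ℝ V6 :=
  Submodule.span ℝ ({σ₁ p, τ₁ p, pv σ₁ p} : Set V6)

open Set intervalIntegral in
/-- Solutions of `y' = g y + h • z` on an interval stay in `span {y u₁, z}`. -/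
lemma ode_mem_span {a b : ℝ} (g h : ℝ → ℝ) (z : V6) (y : ℝ → V6)
    (hg : ContinuousOn g (Set.Ioo a b)) (hh : ContinuousOn h (Set.Ioo a b))
    (hy : ∀ u ∈ Set.Ioo a b, HasDerivAt y (g u • y u + h u • z) u)
    {u₁ u : ℝ} (hu₁ : u₁ ∈ Set.Ioo a b) (hu : u ∈ Set.Ioo a b) :
    y u ∈ Submodule.span ℝ ({y u₁, z} : Set V6) := by
  have hO : IsOpen (Set.Ioo a b) := isOpen_Ioo
  have hsub : ∀ {w : ℝ}, w ∈ Set.Ioo a b → Set.uIcc u₁ w ⊆ Set.Ioo a b := fun hw =>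
    Set.ordConnected_Ioo.uIcc_subset hu₁ hw
  -- antiderivative of g
  set A : ℝ → ℝ := fun w => ∫ s in u₁..w, g s with hAdef
  have hA : ∀ w ∈ Set.Ioo a b, HasDerivAt A (g w) w := by
    intro w hw
    exact integral_hasDerivAt_right ((hg.mono (hsub hw)).intervalIntegrable)
      (hg.stronglyMeasurableAtFilter hO w hw) (hg.continuousAt (hO.mem_nhds hw))
  have hAcont : ContinuousOn A (Set.Ioo a b) := fun w hw =>
    ((hA w hw).continuousAt).continuousWithinAt
  -- integrand for the inhomogeneous term
  set k : ℝ → ℝ := fun s => Real.exp (-(A s)) * h s with hkdef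
  have hk : ContinuousOn k (Set.Ioo a b) := ((hAcont.neg).rexp).mul hh
  set B : ℝ → ℝ := fun w => ∫ s in u₁..w, k s with hBdef
  have hB : ∀ w ∈ Set.Ioo a b, HasDerivAt B (k w) w := by
    intro w hw
    exact integral_hasDerivAt_right ((hk.mono (hsub hw)).intervalIntegrable)
      (hk.stronglyMeasurableAtFilter hO w hw) (hk.continuousAt (hO.mem_nhds hw))
  set F : ℝ → V6 := fun w => Real.exp (-(A w)) • y w - B w • z with hFdef
  have hF : ∀ w ∈ Set.Ioo a b, HasDerivAt F 0 w := by
    intro w hw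
    have hE : HasDerivAt (fun s => Real.exp (-(A s))) (Real.exp (-(A w)) * (-(g w))) w :=
      ((hA w hw).neg).exp
    have h1 : HasDerivAt (fun s => Real.exp (-(A s)) • y s)
        (Real.exp (-(A w)) • (g w • y w + h w • z) + (Real.exp (-(A w)) * (-(g w))) • y w) w :=
      hE.smul (hy w hw)
    have h2 : HasDerivAt (fun s => B s • z) (k w • z + (0 : ℝ → V6) w) w := by
      simpa using (hB w hw).smul_const z
    have := h1.sub h2
    convert this using 1
    case e'_9 =>
      simp only [hkdef, smul_add, smul_smul, Pi.zero_apply, add_zero]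
      module
    all_goals rfl
  -- F is constant on the interval
  have hFconst : F u = F u₁ := by
    rcases le_total u₁ u with hle | hle
    · have hIcc : Set.Icc u₁ u ⊆ Set.Ioo a b := by
        intro x hx; exact ⟨lt_of_lt_of_le hu₁.1 hx.1, lt_of_le_of_lt hx.2 hu.2⟩
      have := constant_of_has_deriv_right_zero
        (fun x hx => ((hF x (hIcc hx)).continuousAt).continuousWithinAt)
        (fun x hx => ((hF x (hIcc (Set.Ico_subset_Icc_self hx))).hasDerivWithinAt))
        u (Set.right_mem_Icc.2 hle)
      simpa using this
    · have hIcc : Set.Icc u u₁ ⊆ Set.Ioo a b := by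
        intro x hx; exact ⟨lt_of_lt_of_le hu.1 hx.1, lt_of_le_of_lt hx.2 hu₁.2⟩
      have := constant_of_has_deriv_right_zero
        (fun x hx => ((hF x (hIcc hx)).continuousAt).continuousWithinAt)
        (fun x hx => ((hF x (hIcc (Set.Ico_subset_Icc_self hx))).hasDerivWithinAt))
        u₁ (Set.right_mem_Icc.2 hle)
      simpa using this.symm
  have hFu₁ : F u₁ = y u₁ := by
    simp [hFdef, hAdef, hBdef, intervalIntegral.integral_same]
  have hexp : Real.exp (-(A u)) • y u = y u₁ + B u • z := by
    have := hFconst.trans hFu₁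
    simp only [hFdef] at this
    linear_combination (norm := module) this
  have : y u = (Real.exp (A u)) • y u₁ + (Real.exp (A u) * B u) • z := by
    have h0 : Real.exp (A u) • (Real.exp (-(A u)) • y u) = y u := by
      rw [smul_smul, ← Real.exp_add]; simp
    rw [← h0, hexp]; rw [smul_add, smul_smul]
  rw [this]
  exact Submodule.mem_span_pair.2 ⟨_, _, rfl⟩


lemma hasDerivAt_line (σ : ℝ × ℝ → V6) (p : ℝ × ℝ) (h : DifferentiableAt ℝ σ p) :
    HasDerivAt (fun u => σ (u, p.2)) (pu σ p) p.1 := by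
  have hL : HasDerivAt (fun u : ℝ => (u, p.2)) ((1 : ℝ), (0 : ℝ)) p.1 :=
    (hasDerivAt_id p.1).prodMk (hasDerivAt_const p.1 p.2)
  have := h.hasFDerivAt.comp_hasDerivAt p.1 (by simpa using hL)
  simpa [pu, Function.comp_def] using this

lemma contDiffOn_pu {U : Set (ℝ × ℝ)} {σ : ℝ × ℝ → V6} (hU : IsOpen U)
    (h : ContDiffOn ℝ (⊤ : ℕ∞) σ U) : ContDiffOn ℝ (⊤ : ℕ∞) (pu σ) U := by
  have hf : ContDiffOn ℝ (⊤ : ℕ∞) (fderiv ℝ σ) U := h.fderiv_of_isOpen hU (by simp)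
  exact hf.clm_apply contDiffOn_const

lemma contDiffOn_pv {U : Set (ℝ × ℝ)} {σ : ℝ × ℝ → V6} (hU : IsOpen U)
    (h : ContDiffOn ℝ (⊤ : ℕ∞) σ U) : ContDiffOn ℝ (⊤ : ℕ∞) (pv σ) U := by
  have hf : ContDiffOn ℝ (⊤ : ℕ∞) (fderiv ℝ σ) U := h.fderiv_of_isOpen hU (by simp)
  exact hf.clm_apply contDiffOn_const

/-- Mixed partials commute: the `u`-derivative of `pv σ` along a horizontal line is `pv (pu σ)`. -/
lemma hasDerivAt_pv_line {U : Set (ℝ × ℝ)} {σ : ℝ × ℝ → V6} (hU : IsOpen U)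
    (h : ContDiffOn ℝ (⊤ : ℕ∞) σ U) {p : ℝ × ℝ} (hp : p ∈ U) :
    HasDerivAt (fun u => pv σ (u, p.2)) (pv (pu σ) p) p.1 := by
  have hf : ContDiffOn ℝ (⊤ : ℕ∞) (fderiv ℝ σ) U := h.fderiv_of_isOpen hU (by simp)
  have hdf : DifferentiableAt ℝ (fderiv ℝ σ) p :=
    ((hf.contDiffAt (hU.mem_nhds hp)).differentiableAt (by simp))
  set f'' := fderiv ℝ (fderiv ℝ σ) p with hf''
  have hsymm : ∀ v w : ℝ × ℝ, f'' v w = f'' w v := by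
    intro v w
    refine second_derivative_symmetric_of_eventually (f := σ) ?_ hdf.hasFDerivAt v w
    filter_upwards [hU.mem_nhds hp] with q hq
    exact ((h.contDiffAt (hU.mem_nhds hq)).differentiableAt (by simp)).hasFDerivAt
  -- derivative of q ↦ fderiv σ q w
  have happ : ∀ w : ℝ × ℝ, HasFDerivAt (fun q => fderiv ℝ σ q w)
      ((fderiv ℝ (fderiv ℝ σ) p).flip w) p := by
    intro w
    have := hdf.hasFDerivAt.clm_apply (hasFDerivAt_const w p)
    simpa using this
  -- pv σ = fun q => fderiv σ q (0,1)
  have h1 : HasDerivAt (fun u => pv σ (u, p.2)) (f'' (1, 0) (0, 1)) p.1 := by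
    have hdiff : DifferentiableAt ℝ (pv σ) p := (happ (0, 1)).differentiableAt
    have := hasDerivAt_line (pv σ) p hdiff
    have heq : pu (pv σ) p = f'' (1, 0) (0, 1) := by
      have := (happ (0, 1)).fderiv
      simp only [pu, pv]
      rw [show (fun q => fderiv ℝ σ q (0, 1)) = pv σ from rfl] at this
      rw [this]; rfl
    rwa [heq] at this
  rw [hsymm (1, 0) (0, 1)] at h1
  have heq2 : f'' (0, 1) (1, 0) = pv (pu σ) p := by
    have := (happ (1, 0)).fderiv
    simp only [pv, pu]
    rw [show (fun q => fderiv ℝ σ q (1, 0)) = pu σ from rfl] at this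
    rw [this]; rfl
  rwa [heq2] at h1

lemma derivAt_mem_submodule {f : ℝ → V6} {f' : V6} {x : ℝ} (h : HasDerivAt f f' x)
    (W : Submodule ℝ V6) (hmem : ∀ᶠ u in nhds x, f u ∈ W) : f' ∈ W := by
  have hclosed : IsClosed (W : Set V6) := Submodule.closed_of_finiteDimensional W
  have htend := hasDerivAt_iff_tendsto_slope.1 h
  refine hclosed.mem_of_tendsto htend ?_
  have : ∀ᶠ u in nhdsWithin x {x}ᶜ, f u ∈ W :=
    nhdsWithin_le_nhds hmem
  filter_upwards [this, eventually_mem_nhdsWithin.mono (fun u (hu : u ∈ ({x}ᶜ : Set ℝ)) => hu)]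
    with u hu _
  have hx : f x ∈ W := hmem.self_of_nhds
  exact W.smul_mem _ (W.sub_mem hu hx)

open Set in
/-- Key local step: near a point, if both surfaces are channel surfaces in the `u`
direction, the cyclide congruence is locally non-increasing along `u`. -/
lemma local_D₁_le {U : Set (ℝ × ℝ)} (hU : IsOpen U) {σ₁ τ₁ : ℝ × ℝ → V6}
    (hs : ContDiffOn ℝ (⊤ : ℕ∞) σ₁ U) (ht : ContDiffOn ℝ (⊤ : ℕ∞) τ₁ U)
    (hch₁ : ∀ q ∈ U, pu σ₁ q ∈ Submodule.span ℝ ({σ₁ q} : Set V6))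
    (hch₂ : ∀ q ∈ U, pu τ₁ q ∈ Submodule.span ℝ ({τ₁ q} : Set V6))
    {u₁ v : ℝ} (hp : (u₁, v) ∈ U) (hσ0 : σ₁ (u₁, v) ≠ 0) (hτ0 : τ₁ (u₁, v) ≠ 0) :
    ∃ ε > 0, ∀ u, |u - u₁| < ε →
      (u, v) ∈ U ∧ D₁ σ₁ τ₁ (u, v) ≤ D₁ σ₁ τ₁ (u₁, v) := by
  obtain ⟨i, hi⟩ := Function.ne_iff.1 hσ0
  obtain ⟨j, hj⟩ := Function.ne_iff.1 hτ0
  -- the open set where the relevant coordinates do not vanish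
  have hcσ : ContinuousOn (fun q => σ₁ q i) U := (continuous_apply i).comp_continuousOn
    (hs.continuousOn)
  have hcτ : ContinuousOn (fun q => τ₁ q j) U := (continuous_apply j).comp_continuousOn
    (ht.continuousOn)
  have hO1 : IsOpen (U ∩ (fun q => σ₁ q i) ⁻¹' ({0}ᶜ)) :=
    hcσ.isOpen_inter_preimage hU isOpen_compl_singleton
  have hO2 : IsOpen (U ∩ (fun q => τ₁ q j) ⁻¹' ({0}ᶜ)) :=
    hcτ.isOpen_inter_preimage hU isOpen_compl_singleton
  set O : Set (ℝ × ℝ) := (U ∩ (fun q => σ₁ q i) ⁻¹' ({0}ᶜ)) ∩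
      (U ∩ (fun q => τ₁ q j) ⁻¹' ({0}ᶜ)) with hOdef
  have hO : IsOpen O := hO1.inter hO2
  have hOU : O ⊆ U := fun q hq => hq.1.1
  have hOσ : ∀ q ∈ O, σ₁ q i ≠ 0 := fun q hq => hq.1.2
  have hOτ : ∀ q ∈ O, τ₁ q j ≠ 0 := fun q hq => hq.2.2
  have hp₀ : (u₁, v) ∈ O := ⟨⟨hp, hi⟩, ⟨hp, hj⟩⟩
  obtain ⟨ε, hε, hball⟩ := Metric.isOpen_iff.1 hO _ hp₀
  refine ⟨ε, hε, ?_⟩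
  have hline : ∀ s : ℝ, s ∈ Set.Ioo (u₁ - ε) (u₁ + ε) → (s, v) ∈ O := by
    intro s hsmem
    apply hball
    have : |s - u₁| < ε := abs_sub_lt_iff.2 ⟨by linarith [hsmem.2], by linarith [hsmem.1]⟩
    simp [Metric.mem_ball, Prod.dist_eq, Real.dist_eq, this, hε]
  set Ib : Set ℝ := Set.Ioo (u₁ - ε) (u₁ + ε) with hIbdef
  have hu₁Ib : u₁ ∈ Ib := by constructor <;> linarith
  -- the logarithmic derivative functions
  set α : ℝ × ℝ → ℝ := fun q => pu σ₁ q i / σ₁ q i with hαdef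
  set β : ℝ × ℝ → ℝ := fun q => pu τ₁ q j / τ₁ q j with hβdef
  have hαs : ContDiffOn ℝ (⊤ : ℕ∞) α O := by
    refine ContDiffOn.div ?_ ?_ hOσ
    · exact (contDiffOn_pi.1 ((contDiffOn_pu hU hs).mono hOU)) i
    · exact (contDiffOn_pi.1 (hs.mono hOU)) i
  have hβs : ContDiffOn ℝ (⊤ : ℕ∞) β O := by
    refine ContDiffOn.div ?_ ?_ hOτ
    · exact (contDiffOn_pi.1 ((contDiffOn_pu hU ht).mono hOU)) j
    · exact (contDiffOn_pi.1 (ht.mono hOU)) j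
  have hαeq : ∀ q ∈ O, pu σ₁ q = α q • σ₁ q := by
    intro q hq
    obtain ⟨c, hc⟩ := Submodule.mem_span_singleton.1 (hch₁ q (hOU hq))
    have hci : α q = c := by
      have h0 : pu σ₁ q i = c * σ₁ q i := by rw [← hc]; rfl
      simp only [hαdef, h0]
      exact mul_div_cancel_right₀ _ (hOσ q hq)
    rw [hci, ← hc]
  have hβeq : ∀ q ∈ O, pu τ₁ q = β q • τ₁ q := by
    intro q hq
    obtain ⟨c, hc⟩ := Submodule.mem_span_singleton.1 (hch₂ q (hOU hq))
    have hci : β q = c := by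
      have h0 : pu τ₁ q j = c * τ₁ q j := by rw [← hc]; rfl
      simp only [hβdef, h0]
      exact mul_div_cancel_right₀ _ (hOτ q hq)
    rw [hci, ← hc]
  -- restrict to the horizontal line
  have hlinecont : Continuous (fun s : ℝ => ((s, v) : ℝ × ℝ)) :=
    continuous_id.prodMk continuous_const
  have hg : ContinuousOn (fun s => α (s, v)) Ib :=
    (hαs.continuousOn).comp hlinecont.continuousOn hline
  have hgβ : ContinuousOn (fun s => β (s, v)) Ib :=
    (hβs.continuousOn).comp hlinecont.continuousOn hline
  set z : V6 := σ₁ (u₁, v) with hzdef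
  set w : V6 := τ₁ (u₁, v) with hwdef
  -- ODE for σ₁
  have hyσ : ∀ u ∈ Ib, HasDerivAt (fun s => σ₁ (s, v))
      ((fun s => α (s, v)) u • σ₁ (u, v) + (fun _ : ℝ => (0 : ℝ)) u • z) u := by
    intro u hu
    have hd : DifferentiableAt ℝ σ₁ (u, v) :=
      (hs.contDiffAt (hU.mem_nhds (hOU (hline u hu)))).differentiableAt (by simp)
    have := hasDerivAt_line σ₁ (u, v) hd
    rw [hαeq (u, v) (hline u hu)] at this
    simpa using this
  have hmemσ : ∀ u ∈ Ib, σ₁ (u, v) ∈ Submodule.span ℝ ({z, z} : Set V6) := by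
    intro u hu
    exact ode_mem_span _ _ z _ hg continuousOn_const hyσ hu₁Ib hu
  -- ODE for τ₁
  have hyτ : ∀ u ∈ Ib, HasDerivAt (fun s => τ₁ (s, v))
      ((fun s => β (s, v)) u • τ₁ (u, v) + (fun _ : ℝ => (0 : ℝ)) u • w) u := by
    intro u hu
    have hd : DifferentiableAt ℝ τ₁ (u, v) :=
      (ht.contDiffAt (hU.mem_nhds (hOU (hline u hu)))).differentiableAt (by simp)
    have := hasDerivAt_line τ₁ (u, v) hd
    rw [hβeq (u, v) (hline u hu)] at this
    simpa using this
  have hmemτ : ∀ u ∈ Ib, τ₁ (u, v) ∈ Submodule.span ℝ ({w, w} : Set V6) := by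
    intro u hu
    exact ode_mem_span _ _ w _ hgβ continuousOn_const hyτ hu₁Ib hu
  -- scalar coefficient for σ₁ along the line
  have hzi : z i ≠ 0 := hi
  set c : ℝ → ℝ := fun s => σ₁ (s, v) i / z i with hcdef
  have hceq : ∀ u ∈ Ib, σ₁ (u, v) = c u • z := by
    intro u hu
    obtain ⟨a, b, hab⟩ := Submodule.mem_span_pair.1 (hmemσ u hu)
    have h1 : σ₁ (u, v) = (a + b) • z := by rw [← hab]; module
    have h2 : c u = a + b := by
      have h0 : σ₁ (u, v) i = (a + b) * z i := by rw [h1]; rfl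
      simp only [hcdef, h0]
      exact mul_div_cancel_right₀ _ hzi
    rw [h2, h1]
  have hccont : ContinuousOn c Ib := by
    have : ContinuousOn (fun s => σ₁ (s, v) i) Ib :=
      ((continuous_apply i).comp_continuousOn
        ((hs.continuousOn).comp hlinecont.continuousOn (fun s hsm => hOU (hline s hsm))))
    exact this.div_const _
  -- the v-derivative of α
  set αv : ℝ × ℝ → ℝ := fun q => fderiv ℝ α q (0, 1) with hαvdef
  have hαvc : ContinuousOn αv O := by
    have h1 : ContDiffOn ℝ (⊤ : ℕ∞) (fderiv ℝ α) O := hαs.fderiv_of_isOpen hO (by simp)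
    exact (h1.clm_apply contDiffOn_const).continuousOn
  set h : ℝ → ℝ := fun s => αv (s, v) * c s with hhdef
  have hhcont : ContinuousOn h Ib :=
    (hαvc.comp hlinecont.continuousOn hline).mul hccont
  -- ODE for y = pv σ₁ along the line
  have hy : ∀ u ∈ Ib, HasDerivAt (fun s => pv σ₁ (s, v))
      ((fun s => α (s, v)) u • pv σ₁ (u, v) + h u • z) u := by
    intro u hu
    have hqO : (u, v) ∈ O := hline u hu
    have hqU : (u, v) ∈ U := hOU hqO
    have hder := hasDerivAt_pv_line hU hs hqU
    -- compute pv (pu σ₁) (u,v)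
    have hev : pu σ₁ =ᶠ[nhds (u, v)] fun r => α r • σ₁ r := by
      filter_upwards [hO.mem_nhds hqO] with r hr using hαeq r hr
    have hdα : DifferentiableAt ℝ α (u, v) :=
      (hαs.contDiffAt (hO.mem_nhds hqO)).differentiableAt (by simp)
    have hdσ : DifferentiableAt ℝ σ₁ (u, v) :=
      (hs.contDiffAt (hU.mem_nhds hqU)).differentiableAt (by simp)
    have hsmul : HasFDerivAt (fun r => α r • σ₁ r)
        (α (u, v) • fderiv ℝ σ₁ (u, v) + (fderiv ℝ α (u, v)).smulRight (σ₁ (u, v))) (u, v) :=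
      hdα.hasFDerivAt.smul hdσ.hasFDerivAt
    have hpv : pv (pu σ₁) (u, v) = α (u, v) • pv σ₁ (u, v) + αv (u, v) • σ₁ (u, v) := by
      have h1 : fderiv ℝ (pu σ₁) (u, v) = fderiv ℝ (fun r => α r • σ₁ r) (u, v) :=
        hev.fderiv_eq
      have h2 := hsmul.fderiv
      simp only [pv, h1, h2, ContinuousLinearMap.add_apply, ContinuousLinearMap.smul_apply,
        ContinuousLinearMap.smulRight_apply, hαvdef]
    rw [hpv, hceq u hu] at hder
    have heq : αv (u, v) • c u • z = h u • z := by rw [smul_smul]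
    rw [heq] at hder
    exact hder
  have hmemy : ∀ u ∈ Ib, pv σ₁ (u, v) ∈
      Submodule.span ℝ ({pv σ₁ (u₁, v), z} : Set V6) := by
    intro u hu
    exact ode_mem_span _ _ z _ hg hhcont hy hu₁Ib hu
  -- conclude
  intro u huabs
  have huIb : u ∈ Ib := by
    rcases abs_sub_lt_iff.1 huabs with ⟨h1, h2⟩
    constructor <;> linarith
  refine ⟨hOU (hline u huIb), ?_⟩
  have hzD : z ∈ D₁ σ₁ τ₁ (u₁, v) := Submodule.subset_span (by left; rfl)
  have hwD : w ∈ D₁ σ₁ τ₁ (u₁, v) := Submodule.subset_span (by right; left; rfl)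
  have hyD : pv σ₁ (u₁, v) ∈ D₁ σ₁ τ₁ (u₁, v) := Submodule.subset_span (by right; right; rfl)
  refine Submodule.span_le.2 ?_
  rintro x (rfl | rfl | rfl)
  · exact Submodule.span_le.2 (Set.pair_subset hzD hzD) (hmemσ u huIb)
  · exact Submodule.span_le.2 (Set.pair_subset hwD hwD) (hmemτ u huIb)
  · exact Submodule.span_le.2 (Set.pair_subset hyD hzD) (hmemy u huIb)

/-- A Ribaucour pair of umbilic-free Legendre maps consists of channel surfaces with
corresponding circular curvature direction `T₁ = ∂_u` if and only if the Ribaucour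
cyclide congruence `D₁` is constant along the leaves of `T₁`. -/
theorem channel_pair_iff_ribaucour_cyclide_congruence_constant
    (I J : Set ℝ) (hI : IsOpen I) (hJ : IsOpen J)
    (hIconn : I.OrdConnected) (hJconn : J.OrdConnected)
    (σ₁ σ₂ τ₁ τ₂ : ℝ × ℝ → V6)
    (hL : IsLegendre (I ×ˢ J) σ₁ σ₂)
    (hL' : IsLegendre (I ×ˢ J) τ₁ τ₂)
    (hne : ∀ p ∈ I ×ˢ J, spanF σ₁ σ₂ p ≠ spanF τ₁ τ₂ p)
    (hmeet : ∀ p ∈ I ×ˢ J, spanF σ₁ σ₂ p ⊓ spanF τ₁ τ₂ p ≠ ⊥)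
    (hD₁dim : ∀ p ∈ I ×ˢ J, Module.finrank ℝ (D₁ σ₁ τ₁ p) = 3)
    (hfD₁ : ∀ p ∈ I ×ˢ J,
      spanF σ₁ σ₂ p ⊓ D₁ σ₁ τ₁ p = Submodule.span ℝ ({σ₁ p} : Set V6))
    (hf'D₁ : ∀ p ∈ I ×ˢ J,
      spanF τ₁ τ₂ p ⊓ D₁ σ₁ τ₁ p = Submodule.span ℝ ({τ₁ p} : Set V6)) :
    (∀ p ∈ I ×ˢ J,
        pu σ₁ p ∈ Submodule.span ℝ ({σ₁ p} : Set V6) ∧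
        pu τ₁ p ∈ Submodule.span ℝ ({τ₁ p} : Set V6)) ↔
      (∀ v ∈ J, ∀ u ∈ I, ∀ u' ∈ I, D₁ σ₁ τ₁ (u, v) = D₁ σ₁ τ₁ (u', v)) := by
  constructor
  · -- channel surfaces ⇒ D₁ constant along u
    intro hch v hv u hu u' hu'
    have hU : IsOpen (I ×ˢ J) := hI.prod hJ
    -- local constancy
    have hloc : ∀ s, s ∈ I → ∃ ε, 0 < ε ∧
        ∀ t, |t - s| < ε → t ∈ I ∧ D₁ σ₁ τ₁ (t, v) = D₁ σ₁ τ₁ (s, v) := by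
      intro s hs
      have hsU : ((s, v) : ℝ × ℝ) ∈ I ×ˢ J := ⟨hs, hv⟩
      have hσ0 : σ₁ (s, v) ≠ 0 := by
        have := (hL.indep (s, v) hsU).ne_zero 0; simpa using this
      have hτ0 : τ₁ (s, v) ≠ 0 := by
        have := (hL'.indep (s, v) hsU).ne_zero 0; simpa using this
      obtain ⟨ε, hε, hprop⟩ := local_D₁_le hU hL.smooth₁ hL'.smooth₁
        (fun q hq => (hch q hq).1) (fun q hq => (hch q hq).2) hsU hσ0 hτ0
      refine ⟨ε, hε, fun t ht => ?_⟩
      obtain ⟨htU, hle⟩ := hprop t ht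
      refine ⟨htU.1, Submodule.eq_of_le_of_finrank_le hle ?_⟩
      rw [hD₁dim (t, v) htU, hD₁dim (s, v) hsU]
    choose ε hεpos hεprop using hloc
    -- clopen argument on the preconnected set I
    have hIpre : IsPreconnected I := isPreconnected_iff_ordConnected.2 hIconn
    set W := D₁ σ₁ τ₁ (u, v) with hW
    suffices h : ∀ t ∈ I, D₁ σ₁ τ₁ (t, v) = W by
      rw [h u' hu']
    by_contra hcon
    push_neg at hcon
    obtain ⟨t₀, ht₀I, ht₀⟩ := hcon
    set A : Set ℝ := ⋃ (s : ℝ) (hs : s ∈ I) (_ : D₁ σ₁ τ₁ (s, v) = W),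
      Metric.ball s (ε s hs) with hA
    set B : Set ℝ := ⋃ (s : ℝ) (hs : s ∈ I) (_ : D₁ σ₁ τ₁ (s, v) ≠ W),
      Metric.ball s (ε s hs) with hB
    have hAopen : IsOpen A := isOpen_iUnion fun s =>
      isOpen_iUnion fun hs => isOpen_iUnion fun _ => Metric.isOpen_ball
    have hBopen : IsOpen B := isOpen_iUnion fun s =>
      isOpen_iUnion fun hs => isOpen_iUnion fun _ => Metric.isOpen_ball
    have hcover : I ⊆ A ∪ B := by
      intro s hs
      by_cases hsW : D₁ σ₁ τ₁ (s, v) = W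
      · exact Or.inl (Set.mem_iUnion.2 ⟨s, Set.mem_iUnion.2 ⟨hs, Set.mem_iUnion.2
          ⟨hsW, Metric.mem_ball_self (hεpos s hs)⟩⟩⟩)
      · exact Or.inr (Set.mem_iUnion.2 ⟨s, Set.mem_iUnion.2 ⟨hs, Set.mem_iUnion.2
          ⟨hsW, Metric.mem_ball_self (hεpos s hs)⟩⟩⟩)
    have hAne : (I ∩ A).Nonempty := by
      refine ⟨u, hu, Set.mem_iUnion.2 ⟨u, Set.mem_iUnion.2 ⟨hu, Set.mem_iUnion.2
        ⟨rfl, Metric.mem_ball_self (hεpos u hu)⟩⟩⟩⟩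
    have hBne : (I ∩ B).Nonempty := by
      refine ⟨t₀, ht₀I, Set.mem_iUnion.2 ⟨t₀, Set.mem_iUnion.2 ⟨ht₀I, Set.mem_iUnion.2
        ⟨ht₀, Metric.mem_ball_self (hεpos t₀ ht₀I)⟩⟩⟩⟩
    obtain ⟨x, hxI, hxA, hxB⟩ := hIpre A B hAopen hBopen hcover hAne hBne
    obtain ⟨s₁, hs₁⟩ := Set.mem_iUnion.1 hxA
    obtain ⟨hs₁I, hs₁'⟩ := Set.mem_iUnion.1 hs₁
    obtain ⟨hs₁W, hs₁ball⟩ := Set.mem_iUnion.1 hs₁'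
    obtain ⟨s₂, hs₂⟩ := Set.mem_iUnion.1 hxB
    obtain ⟨hs₂I, hs₂'⟩ := Set.mem_iUnion.1 hs₂
    obtain ⟨hs₂W, hs₂ball⟩ := Set.mem_iUnion.1 hs₂'
    have h1 : D₁ σ₁ τ₁ (x, v) = D₁ σ₁ τ₁ (s₁, v) :=
      (hεprop s₁ hs₁I x (by simpa [Real.dist_eq] using hs₁ball)).2
    have h2 : D₁ σ₁ τ₁ (x, v) = D₁ σ₁ τ₁ (s₂, v) :=
      (hεprop s₂ hs₂I x (by simpa [Real.dist_eq] using hs₂ball)).2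
    exact hs₂W (h2 ▸ h1 ▸ hs₁W)
  · -- D₁ constant along u ⇒ channel surfaces
    intro hconst p hp
    have hU : IsOpen (I ×ˢ J) := hI.prod hJ
    have hp1 : p.1 ∈ I := hp.1
    have hp2 : p.2 ∈ J := hp.2
    have hpeta : ((p.1, p.2) : ℝ × ℝ) = p := rfl
    have hσmem : ∀ q : ℝ × ℝ, σ₁ q ∈ D₁ σ₁ τ₁ q := fun q =>
      Submodule.subset_span (by left; rfl)
    have hτmem : ∀ q : ℝ × ℝ, τ₁ q ∈ D₁ σ₁ τ₁ q := fun q =>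
      Submodule.subset_span (by right; left; rfl)
    have hev : ∀ᶠ t in nhds p.1, t ∈ I := hI.mem_nhds hp1
    have hpuσ : pu σ₁ p ∈ D₁ σ₁ τ₁ p := by
      have hd : DifferentiableAt ℝ σ₁ p :=
        (hL.smooth₁.contDiffAt (hU.mem_nhds hp)).differentiableAt (by simp)
      refine derivAt_mem_submodule (hasDerivAt_line σ₁ p hd) _ ?_
      filter_upwards [hev] with t ht
      have := hconst p.2 hp2 t ht p.1 hp1
      rw [hpeta] at this
      exact this ▸ hσmem (t, p.2)
    have hpuτ : pu τ₁ p ∈ D₁ σ₁ τ₁ p := by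
      have hd : DifferentiableAt ℝ τ₁ p :=
        (hL'.smooth₁.contDiffAt (hU.mem_nhds hp)).differentiableAt (by simp)
      refine derivAt_mem_submodule (hasDerivAt_line τ₁ p hd) _ ?_
      filter_upwards [hev] with t ht
      have := hconst p.2 hp2 t ht p.1 hp1
      rw [hpeta] at this
      exact this ▸ hτmem (t, p.2)
    constructor
    · have : pu σ₁ p ∈ spanF σ₁ σ₂ p ⊓ D₁ σ₁ τ₁ p :=
        Submodule.mem_inf.2 ⟨hL.curv₁ p hp, hpuσ⟩
      rwa [hfD₁ p hp] at this
    · have : pu τ₁ p ∈ spanF τ₁ τ₂ p ⊓ D₁ σ₁ τ₁ p :=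
        Submodule.mem_inf.2 ⟨hL'.curv₁ p hp, hpuτ⟩
      rwa [hf'D₁ p hp] at this
end
end
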